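/- arXiv:math/0102012 — 8 statements merged into one kernel-verified Lean document; each statement's English description precedes it below -/
import Mathlib

section
/- Let p be a prime and let f(z) = πz + z^q be a polynomial over a complete nonarchimedean field L of residue cardinality q and ramification index e over Q_p (so |π| = p^{-1/e}, with |p| = p^{-1}). For any real r with p^{-q/(e(q-1))} ≤ r < 1 and any z in the open unit disk, |f(z)| ≤ r if and only if |z| ≤ r^{1/q}. -/
/-- For the Lubin-Tate multiplication-by-`π` polynomial
`f(z) = π z + z^q` over a complete nonarchimedean field `L` with `‖π‖ = p^(-1/e)`
(normalized so `‖p‖ = p⁻¹`), and any real `r` with `p^(-q/(e(q-1))) ≤ r < 1`,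
for every `z` in the open unit disk we have `‖f z‖ ≤ r ↔ ‖z‖ ≤ r^(1/q)`. -/
theorem stmt_0 (p : ℕ) (hp : p.Prime) (L : Type*) [NormedField L] [IsUltrametricDist L]
    [CompleteSpace L] (e q : ℕ) (he : 1 ≤ e) (hq : 2 ≤ q)
    (π : L) (hπ : ‖π‖ = (p : ℝ) ^ (-(1 : ℝ) / e))
    (r : ℝ) (hr₁ : (p : ℝ) ^ (-(q : ℝ) / (e * (q - 1))) ≤ r) (hr₂ : r < 1)
    (z : L) (hz : ‖z‖ < 1) :
    ‖π * z + z ^ q‖ ≤ r ↔ ‖z‖ ≤ r ^ ((1 : ℝ) / q) := by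
  have hP : (1 : ℝ) < p := by exact_mod_cast hp.one_lt
  have hP0 : (0 : ℝ) < p := lt_trans one_pos hP
  have hE0 : (0 : ℝ) < e := by exact_mod_cast lt_of_lt_of_le one_pos he
  have hQ2 : (2 : ℝ) ≤ (q : ℝ) := by exact_mod_cast hq
  have hQ0 : (0 : ℝ) < q := lt_of_lt_of_le two_pos hQ2
  have hQ1 : (0 : ℝ) < (q : ℝ) - 1 := by linarith
  have hr0 : 0 < r := lt_of_lt_of_le (Real.rpow_pos_of_pos hP0 _) hr₁
  set a := ‖z‖ with ha
  have ha0 : 0 ≤ a := norm_nonneg z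
  have hrq : (r ^ ((1:ℝ)/q)) ^ q = r := by
    rw [← Real.rpow_natCast (r ^ ((1:ℝ)/q)) q, ← Real.rpow_mul hr0.le,
      one_div, inv_mul_cancel₀ hQ0.ne', Real.rpow_one]
  have haq : ‖z ^ q‖ = a ^ q := by rw [norm_pow]
  have hiff : a ≤ r ^ ((1:ℝ)/q) ↔ a ^ q ≤ r := by
    conv_rhs => rw [← hrq]
    exact (pow_le_pow_iff_left₀ ha0 (Real.rpow_nonneg hr0.le _) (by omega : q ≠ 0)).symm
  rw [hiff]
  constructor
  · intro hf
    by_contra hcon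
    push_neg at hcon
    have hstep : (p:ℝ) ^ (-(1:ℝ) / (e * ((q:ℝ) - 1))) < a := by
      have h1 : (p:ℝ) ^ (-(q:ℝ) / (e * ((q:ℝ)-1))) < a ^ q := lt_of_le_of_lt hr₁ hcon
      have h2 := Real.rpow_lt_rpow (Real.rpow_nonneg hP0.le _) h1 (by positivity : (0:ℝ) < 1/q)
      rw [← Real.rpow_natCast a q, ← Real.rpow_mul ha0, ← Real.rpow_mul hP0.le] at h2
      have e1 : -(q:ℝ) / (↑e * ((q:ℝ) - 1)) * (1/q) = -(1:ℝ)/(↑e*((q:ℝ)-1)) := by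
        field_simp
      have e2 : (q:ℝ) * (1/q) = 1 := by field_simp
      rwa [e1, e2, Real.rpow_one] at h2
    have ha0' : 0 < a := lt_of_le_of_lt (Real.rpow_pos_of_pos hP0 _).le hstep
    have hc : ‖π‖ * a < a ^ q := by
      have h3 := Real.rpow_lt_rpow (Real.rpow_nonneg hP0.le _) hstep hQ1
      rw [← Real.rpow_mul hP0.le] at h3
      have hexp : -(1:ℝ) / (e * ((q:ℝ)-1)) * ((q:ℝ)-1) = -(1:ℝ)/e := by
        field_simp
      rw [hexp, ← hπ] at h3
      calc ‖π‖ * a < a ^ ((q:ℝ)-1) * a := mul_lt_mul_of_pos_right h3 ha0'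
        _ = a ^ ((q:ℝ)-1) * a ^ (1:ℝ) := by rw [Real.rpow_one]
        _ = a ^ ((q:ℝ)) := by rw [← Real.rpow_add ha0']; norm_num
        _ = a ^ q := by rw [Real.rpow_natCast]
    have hne : ‖π * z‖ ≠ ‖z ^ q‖ := by rw [norm_mul, haq]; exact hc.ne
    have hnorm : ‖π * z + z ^ q‖ = a ^ q := by
      rw [IsUltrametricDist.norm_add_eq_max_of_norm_ne_norm hne, haq, norm_mul,
        max_eq_right hc.le]
    rw [hnorm] at hf
    exact absurd hf (not_le.mpr hcon)
  · intro hzr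
    refine le_trans (IsUltrametricDist.norm_add_le_max _ _) (max_le ?_ (by rwa [haq]))
    have hle : a ≤ r ^ ((1:ℝ)/q) := hiff.mpr hzr
    have hcle : ‖π‖ ≤ r ^ (((q:ℝ)-1)/q) := by
      have h4 := Real.rpow_le_rpow (Real.rpow_nonneg hP0.le _) hr₁
        (by positivity : (0:ℝ) ≤ ((q:ℝ)-1)/q)
      rw [← Real.rpow_mul hP0.le] at h4
      have hexp : -(q:ℝ) / (e * ((q:ℝ)-1)) * (((q:ℝ)-1)/q) = -(1:ℝ)/e := by
        field_simp
      rwa [hexp, ← hπ] at h4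
    calc ‖π * z‖ = ‖π‖ * a := norm_mul π z
      _ ≤ r ^ (((q:ℝ)-1)/q) * r ^ ((1:ℝ)/q) :=
          mul_le_mul hcle hle ha0 (Real.rpow_nonneg hr0.le _)
      _ = r := by
          rw [← Real.rpow_add hr0]
          have : ((q:ℝ)-1)/q + 1/q = 1 := by field_simp; ring
          rw [this, Real.rpow_one]
end

section
/- Let F: G → H be a homomorphism of one-dimensional formal groups over the ring of integers of C_p, given by a nonzero power series F(Z) with zero constant term. If F(z) = 0 for some z in the open unit disk of C_p, then z is a torsion point of the group G(C_p) (the open unit disk with group law given by G). -/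
open Filter Topology

/-- If `u n < c` for all `n`, `u → 0`, `0 < c`, then there is a uniform bound `c' < c`. -/
lemma aux_sup_lt {c : ℝ} (u : ℕ → ℝ) (hc : ∀ n, u n < c)
    (hlim : Tendsto u atTop (𝓝 0)) (hcpos : 0 < c) :
    ∃ c', c' < c ∧ ∀ n, u n ≤ c' := by
  have h2 : ∀ᶠ n in atTop, u n < c / 2 :=
    hlim.eventually_lt_const (half_pos hcpos)
  obtain ⟨Kb, hKb⟩ := eventually_atTop.mp h2
  have hne : (Finset.range (Kb + 1)).Nonempty := ⟨0, by simp⟩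
  refine ⟨max (c / 2) ((Finset.range (Kb + 1)).sup' hne u), ?_, ?_⟩
  · apply max_lt (half_lt_self hcpos)
    exact (Finset.sup'_lt_iff hne).mpr fun n _ => hc n
  · intro n
    rcases le_or_gt n Kb with hn | hn
    · exact le_max_of_le_right (Finset.le_sup' u (by simp [Nat.lt_succ_iff.mpr hn]))
    · exact le_max_of_le_left (hKb n hn.le).le

/-- Strassmann-type lemma: a power series with bounded coefficients whose dominant
index (for radius `r`) is `N` has at most `N` zeros in the closed disk of radius `r`. -/
lemma aux_strassmann {K : Type*} [NormedField K] [IsUltrametricDist K] [CompleteSpace K] :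
    ∀ N : ℕ, ∀ (a : ℕ → K) (r : ℝ), 0 < r → r < 1 → (∀ n, ‖a n‖ ≤ 1) → a N ≠ 0 →
    (∀ k, N < k → ‖a k‖ * r ^ k < ‖a N‖ * r ^ N) →
    ∀ x : Fin (N + 1) → K, Function.Injective x → (∀ i, ‖x i‖ ≤ r) →
    (∀ i, HasSum (fun n => a n * x i ^ n) 0) → False := by
  intro N
  induction N with
  | zero =>
    intro a r hr hr1 hb hN hmax x hinj hxr hzero
    set c := x 0 with hcdef
    have hterm : ∀ w : K, ‖w‖ ≤ r → ∀ n : ℕ, ‖a n * w ^ n‖ ≤ r ^ n := by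
      intro w hw n
      rw [norm_mul, norm_pow]
      calc ‖a n‖ * ‖w‖ ^ n ≤ 1 * r ^ n := by
            apply mul_le_mul (hb n) (pow_le_pow_left₀ (norm_nonneg _) hw n)
              (pow_nonneg (norm_nonneg _) n) zero_le_one
        _ = r ^ n := one_mul _
    have hsum : Summable (fun n => a n * c ^ n) :=
      Summable.of_norm_bounded (summable_geometric_of_lt_one hr.le hr1)
        (hterm c (hxr 0))
    -- uniform strict bound on the tail coefficients
    have hna : 0 < ‖a 0‖ := norm_pos_iff.mpr hN
    obtain ⟨c', hc'lt, hc'⟩ :=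
      aux_sup_lt (fun j => ‖a (j + 1)‖ * r ^ (j + 1))
        (fun j => by simpa using hmax (j + 1) (Nat.succ_pos j))
        (by
          apply squeeze_zero (fun n => mul_nonneg (norm_nonneg _) (pow_nonneg hr.le _))
            (fun n => ?_) (tendsto_pow_atTop_nhds_zero_of_lt_one hr.le hr1)
          calc ‖a (n + 1)‖ * r ^ (n + 1) ≤ 1 * r ^ (n + 1) :=
                mul_le_mul_of_nonneg_right (hb _) (pow_nonneg hr.le _)
            _ = r ^ n * r := by rw [one_mul, pow_succ]
            _ ≤ r ^ n * 1 := mul_le_mul_of_nonneg_left hr1.le (pow_nonneg hr.le _)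
            _ = r ^ n := mul_one _)
        (by simpa using hna)
    have h0 : (0 : K) = a 0 * c ^ 0 + ∑' n, a (n + 1) * c ^ (n + 1) := by
      rw [← Summable.tsum_eq_zero_add hsum, hsum.hasSum.unique (hzero 0)]
    have htail : ‖∑' n, a (n + 1) * c ^ (n + 1)‖ ≤ c' := by
      apply IsUltrametricDist.norm_tsum_le_of_forall_le_of_nonneg
        (le_trans (mul_nonneg (norm_nonneg _) (pow_nonneg hr.le _)) (hc' 0))
      intro n
      calc ‖a (n + 1) * c ^ (n + 1)‖ ≤ ‖a (n + 1)‖ * r ^ (n + 1) := by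
            rw [norm_mul, norm_pow]
            exact mul_le_mul_of_nonneg_left
              (pow_le_pow_left₀ (norm_nonneg _) (hxr 0) _) (norm_nonneg _)
        _ ≤ c' := hc' n
    have : ‖a 0‖ ≤ c' := by
      have : a 0 = -(∑' n, a (n + 1) * c ^ (n + 1)) := by
        rw [eq_neg_iff_add_eq_zero]
        simpa [eq_comm] using h0
      rw [this, norm_neg]; exact htail
    have hfin : ‖a 0‖ < ‖a 0‖ := lt_of_le_of_lt this (by simpa using hc'lt)
    exact absurd hfin (lt_irrefl _)
  | succ N ih =>
    intro a r hr hr1 hb hN hmax x hinj hxr hzero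
    set c := x (Fin.last (N + 1)) with hcdef
    have hcr : ‖c‖ ≤ r := hxr _
    have hterm : ∀ w : K, ‖w‖ ≤ r → ∀ (d : ℕ → K), (∀ n, ‖d n‖ ≤ 1) →
        ∀ n : ℕ, ‖d n * w ^ n‖ ≤ r ^ n := by
      intro w hw d hd n
      rw [norm_mul, norm_pow]
      calc ‖d n‖ * ‖w‖ ^ n ≤ 1 * r ^ n :=
            mul_le_mul (hd n) (pow_le_pow_left₀ (norm_nonneg _) hw n)
              (pow_nonneg (norm_nonneg _) n) zero_le_one
        _ = r ^ n := one_mul _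
    have hsummable : ∀ (d : ℕ → K), (∀ n, ‖d n‖ ≤ 1) → ∀ w : K, ‖w‖ ≤ r →
        Summable (fun n => d n * w ^ n) := fun d hd w hw =>
      Summable.of_norm_bounded (summable_geometric_of_lt_one hr.le hr1) (hterm w hw d hd)
    -- the shifted/divided series coefficients
    have hshift : ∀ n, (∀ m, ‖a (n + m)‖ ≤ 1) := fun n m => hb _
    have hsumB : ∀ n, Summable (fun m => a (n + m) * c ^ m) := fun n =>
      hsummable (fun m => a (n + m)) (hshift n) c hcr
    set B : ℕ → K := fun n => ∑' m, a (n + m) * c ^ m with hBdef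
    have hBnorm : ∀ n, ‖B n‖ ≤ 1 := by
      intro n
      apply IsUltrametricDist.norm_tsum_le_of_forall_le_of_nonneg zero_le_one
      intro m
      calc ‖a (n + m) * c ^ m‖ ≤ r ^ m := hterm c hcr _ (hshift n) m
        _ ≤ 1 := pow_le_one₀ hr.le hr1.le
    have hBrec : ∀ n, B n = a n + c * B (n + 1) := by
      intro n
      show (∑' m, a (n + m) * c ^ m) = a n + c * ∑' m, a (n + 1 + m) * c ^ m
      rw [Summable.tsum_eq_zero_add (hsumB n)]
      simp only [add_zero, pow_zero, mul_one]
      congr 1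
      rw [← tsum_mul_left]
      apply tsum_congr
      intro m
      rw [show n + (m + 1) = n + 1 + m by omega]
      ring
    have hB0 : B 0 = 0 := by
      have : B 0 = ∑' m, a m * c ^ m := tsum_congr fun m => by rw [zero_add]
      rw [this, (hzero (Fin.last (N + 1))).tsum_eq]
    -- key partial-sum factorization
    have key : ∀ w : K, ∀ Kn : ℕ,
        ∑ n ∈ Finset.range Kn, a n * w ^ n =
          (w - c) * ∑ n ∈ Finset.range Kn, B (n + 1) * w ^ n - B Kn * w ^ Kn := by
      intro w Kn
      induction Kn with
      | zero => simp [hB0]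
      | succ Kn ihk =>
        rw [Finset.sum_range_succ, Finset.sum_range_succ, ihk,
          show a Kn = B Kn - c * B (Kn + 1) by rw [hBrec Kn]; ring]
        ring
    -- the tail-coefficient uniform bound
    have hna : 0 < ‖a (N + 1)‖ := norm_pos_iff.mpr hN
    have hMpos : 0 < ‖a (N + 1)‖ * r ^ (N + 1) :=
      mul_pos hna (pow_pos hr _)
    obtain ⟨c', hc'lt, hc'⟩ :=
      aux_sup_lt (fun j => ‖a (N + 2 + j)‖ * r ^ (N + 2 + j))
        (fun j => hmax (N + 2 + j) (by omega))
        (by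
          apply squeeze_zero (fun n => mul_nonneg (norm_nonneg _) (pow_nonneg hr.le _))
            (fun n => ?_) (tendsto_pow_atTop_nhds_zero_of_lt_one hr.le hr1)
          calc ‖a (N + 2 + n)‖ * r ^ (N + 2 + n) ≤ 1 * r ^ (N + 2 + n) :=
                mul_le_mul_of_nonneg_right (hb _) (pow_nonneg hr.le _)
            _ = r ^ (N + 2) * r ^ n := by rw [one_mul, pow_add]
            _ ≤ 1 * r ^ n := mul_le_mul_of_nonneg_right
                (pow_le_one₀ hr.le hr1.le) (pow_nonneg hr.le _)
            _ = r ^ n := one_mul _)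
        hMpos
    have hc'0 : 0 ≤ c' :=
      le_trans (mul_nonneg (norm_nonneg _) (pow_nonneg hr.le _)) (hc' 0)
    -- bound on the tails of B
    have hBn : ∀ n, N + 2 ≤ n → ‖B n‖ * r ^ n ≤ c' := by
      intro n hn
      have hrn : (0 : ℝ) < r ^ n := pow_pos hr _
      rw [← le_div_iff₀ hrn] at *
      apply IsUltrametricDist.norm_tsum_le_of_forall_le_of_nonneg
        (div_nonneg hc'0 hrn.le)
      intro m
      rw [le_div_iff₀ hrn]
      obtain ⟨d, rfl⟩ : ∃ d, n = N + 2 + d := ⟨n - (N + 2), by omega⟩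
      calc ‖a (N + 2 + d + m) * c ^ m‖ * r ^ (N + 2 + d) ≤
            (‖a (N + 2 + d + m)‖ * r ^ m) * r ^ (N + 2 + d) := by
            apply mul_le_mul_of_nonneg_right _ (pow_nonneg hr.le _)
            rw [norm_mul, norm_pow]
            exact mul_le_mul_of_nonneg_left (pow_le_pow_left₀ (norm_nonneg _) hcr _)
              (norm_nonneg _)
        _ = ‖a (N + 2 + (d + m))‖ * r ^ (N + 2 + (d + m)) := by
            rw [show N + 2 + d + m = N + 2 + (d + m) by omega, pow_add, pow_add, pow_add]
            ring
        _ ≤ c' := hc' (d + m)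
    -- the divided series vanishes at the other zeros
    have hg : ∀ i : Fin (N + 2), x i ≠ c →
        HasSum (fun n => B (n + 1) * x i ^ n) 0 := by
      intro i hne
      set w := x i with hwdef
      have hwr : ‖w‖ ≤ r := hxr i
      have sb : Summable (fun n => B (n + 1) * w ^ n) :=
        hsummable (fun n => B (n + 1)) (fun n => hBnorm _) w hwr
      have hps : Tendsto (fun Kn => ∑ n ∈ Finset.range Kn, a n * w ^ n)
          atTop (𝓝 0) := (hzero i).tendsto_sum_nat
      have hBK : Tendsto (fun Kn => B Kn * w ^ Kn) atTop (𝓝 0) := by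
        apply tendsto_zero_iff_norm_tendsto_zero.mpr
        exact squeeze_zero (fun n => norm_nonneg _)
          (fun n => hterm w hwr B hBnorm n)
          (tendsto_pow_atTop_nhds_zero_of_lt_one hr.le hr1)
      have h1 : Tendsto (fun Kn => (w - c) *
          ∑ n ∈ Finset.range Kn, B (n + 1) * w ^ n) atTop (𝓝 0) := by
        have : (fun Kn => (w - c) * ∑ n ∈ Finset.range Kn, B (n + 1) * w ^ n) =
            (fun Kn => (∑ n ∈ Finset.range Kn, a n * w ^ n) + B Kn * w ^ Kn) := by
          funext Kn
          rw [key w Kn]; ring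
        rw [this]
        simpa using hps.add hBK
      have h2 : Tendsto (fun Kn => (w - c) *
          ∑ n ∈ Finset.range Kn, B (n + 1) * w ^ n) atTop
          (𝓝 ((w - c) * ∑' n, B (n + 1) * w ^ n)) :=
        (sb.hasSum.tendsto_sum_nat).const_mul (w - c)
      have h3 : (w - c) * (∑' n, B (n + 1) * w ^ n) = 0 :=
        tendsto_nhds_unique h2 h1
      have h4 : (∑' n, B (n + 1) * w ^ n) = 0 := by
        rcases mul_eq_zero.mp h3 with h | h
        · exact absurd (sub_eq_zero.mp h) hne
        · exact h
      exact h4 ▸ sb.hasSum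
    -- B (N+1) is the new dominant coefficient
    have hdiff : ‖c * B (N + 2)‖ < ‖a (N + 1)‖ := by
      have h1 : ‖c * B (N + 2)‖ * r ^ (N + 1) ≤ c' := by
        calc ‖c * B (N + 2)‖ * r ^ (N + 1) ≤ (r * ‖B (N + 2)‖) * r ^ (N + 1) := by
              apply mul_le_mul_of_nonneg_right _ (pow_nonneg hr.le _)
              rw [norm_mul]
              exact mul_le_mul_of_nonneg_right hcr (norm_nonneg _)
          _ = ‖B (N + 2)‖ * r ^ (N + 2) := by rw [pow_succ]; ring
          _ ≤ c' := hBn (N + 2) le_rfl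
      have h2 : ‖c * B (N + 2)‖ * r ^ (N + 1) < ‖a (N + 1)‖ * r ^ (N + 1) :=
        lt_of_le_of_lt h1 hc'lt
      exact lt_of_mul_lt_mul_right h2 (pow_nonneg hr.le _)
    have hBval : ‖a (N + 1)‖ ≤ ‖B (N + 1)‖ := by
      have heq : a (N + 1) = B (N + 1) + -(c * B (N + 2)) := by
        rw [hBrec (N + 1)]; ring
      have := heq ▸ IsUltrametricDist.norm_add_le_max (B (N + 1)) (-(c * B (N + 2)))
      rcases max_cases ‖B (N + 1)‖ ‖-(c * B (N + 2))‖ with ⟨hm, _⟩ | ⟨hm, _⟩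
      · rwa [hm] at this
      · rw [hm, norm_neg] at this
        exact absurd (lt_of_le_of_lt this hdiff) (lt_irrefl _)
    have hBne : B (N + 1) ≠ 0 := by
      intro h
      rw [h, norm_zero] at hBval
      exact absurd (lt_of_lt_of_le hna hBval) (lt_irrefl _)
    have hdom' : ∀ k, N < k → ‖B (k + 1)‖ * r ^ k < ‖B (N + 1)‖ * r ^ N := by
      intro k hk
      have h1 : (‖B (k + 1)‖ * r ^ k) * r ≤ c' := by
        have := hBn (k + 1) (by omega)
        calc (‖B (k + 1)‖ * r ^ k) * r = ‖B (k + 1)‖ * r ^ (k + 1) := by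
              rw [pow_succ]; ring
          _ ≤ c' := this
      have h2 : c' < (‖B (N + 1)‖ * r ^ N) * r := by
        calc c' < ‖a (N + 1)‖ * r ^ (N + 1) := hc'lt
          _ ≤ ‖B (N + 1)‖ * r ^ (N + 1) :=
              mul_le_mul_of_nonneg_right hBval (pow_nonneg hr.le _)
          _ = (‖B (N + 1)‖ * r ^ N) * r := by rw [pow_succ]; ring
      exact lt_of_mul_lt_mul_right (lt_of_le_of_lt h1 h2) hr.le
    -- apply the induction hypothesis
    apply ih (fun n => B (n + 1)) r hr hr1 (fun n => hBnorm _) hBne hdom'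
      (fun i : Fin (N + 1) => x i.castSucc)
    · intro i j hij
      exact Fin.castSucc_injective _ (hinj hij)
    · exact fun i => hxr _
    · intro i
      apply hg
      intro h
      exact absurd (hinj h) (Fin.castSucc_lt_last i).ne


/-- Let `F : G → H` be a nonzero homomorphism of one-dimensional formal
groups over `o_{ℂ_p}` (modelled on a complete algebraically closed nonarchimedean field `K`),
given by a power series with integral coefficients and zero constant term.  The `ℂ_p`-points
of `G` form a group on the open unit disk, with group law `addG` (given by a formal group
law with integral coefficients, so that `‖x +_G y‖ ≤ max ‖x‖ ‖y‖`), identity `0`.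
If `F(z) = 0` for some `z` in the open unit disk, then `z` is a torsion point of `G(ℂ_p)`,
i.e. some nonzero multiple `n • z = z +_G ⋯ +_G z` (with identity `0`) vanishes. -/
theorem stmt_2 (K : Type*) [NormedField K] [IsUltrametricDist K]
    [CompleteSpace K] [IsAlgClosed K]
    (addG addH : K → K → K)
    -- `addG` is a commutative group law on the open unit disk with identity `0`
    (haddG_mem : ∀ x y : K, ‖x‖ < 1 → ‖y‖ < 1 → ‖addG x y‖ ≤ max ‖x‖ ‖y‖)
    (haddG_zero : ∀ x : K, ‖x‖ < 1 → addG 0 x = x ∧ addG x 0 = x)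
    (haddG_comm : ∀ x y : K, ‖x‖ < 1 → ‖y‖ < 1 → addG x y = addG y x)
    (haddG_assoc : ∀ x y w : K, ‖x‖ < 1 → ‖y‖ < 1 → ‖w‖ < 1 →
      addG (addG x y) w = addG x (addG y w))
    (haddH_zero : ∀ y : K, ‖y‖ < 1 → addH 0 y = y ∧ addH y 0 = y)
    (haddG_inv : ∀ x : K, ‖x‖ < 1 → ∃ y : K, ‖y‖ < 1 ∧ addG x y = 0)
    -- `F` is given by a nonzero power series with integral coefficients, zero constant term
    (a : ℕ → K) (ha_int : ∀ n, ‖a n‖ ≤ 1) (ha0 : a 0 = 0) (ha_ne : ∃ n, a n ≠ 0)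
    (F : K → K)
    (hF : ∀ z : K, ‖z‖ < 1 → HasSum (fun n => a n * z ^ n) (F z))
    -- `F` is a homomorphism of the formal group points
    (hFhom : ∀ x y : K, ‖x‖ < 1 → ‖y‖ < 1 → F (addG x y) = addH (F x) (F y))
    (z : K) (hz : ‖z‖ < 1) (hFz : F z = 0) :
    ∃ n : ℕ, 0 < n ∧ (fun w => addG z w)^[n] 0 = 0 := by
  classical
  set y : ℕ → K := fun n => (fun w => addG z w)^[n] 0 with hydef
  have hy0 : y 0 = 0 := rfl
  have hysucc : ∀ n, y (n + 1) = addG z (y n) := by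
    intro n
    rw [hydef]
    simp only [Function.iterate_succ_apply']
  have h01 : ‖(0 : K)‖ < 1 := by simp
  have hyr : ∀ n, ‖y n‖ ≤ ‖z‖ := by
    intro n
    induction n with
    | zero => simp [hy0]
    | succ n ihn =>
      rw [hysucc]
      exact le_trans (haddG_mem z (y n) hz (lt_of_le_of_lt ihn hz))
        (max_le le_rfl ihn)
  have hy1 : ∀ n, ‖y n‖ < 1 := fun n => lt_of_le_of_lt (hyr n) hz
  have hyF : ∀ n, F (y n) = 0 := by
    intro n
    induction n with
    | zero =>
      rw [hy0]
      have h0sum : HasSum (fun n => a n * (0 : K) ^ n) 0 := by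
        have : HasSum (fun n => a n * (0 : K) ^ n) (a 0 * 0 ^ 0) :=
          hasSum_single 0 (fun b hb => by simp [zero_pow hb])
        simpa [ha0] using this
      exact (hF 0 h01).unique h0sum
    | succ n ihn =>
      rw [hysucc, hFhom z (y n) hz (hy1 n), hFz, ihn]
      exact (haddH_zero 0 h01).1
  have hyadd : ∀ m n, y (m + n) = addG (y m) (y n) := by
    intro m
    induction m with
    | zero =>
      intro n
      rw [Nat.zero_add, hy0]
      exact ((haddG_zero (y n) (hy1 n)).1).symm
    | succ m ihm =>
      intro n
      rw [show m + 1 + n = m + n + 1 by omega, hysucc, ihm n,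
        ← haddG_assoc z (y m) (y n) hz (hy1 m) (hy1 n), ← hysucc]
  by_contra hcon
  push_neg at hcon
  have hcon' : ∀ n, 0 < n → y n ≠ 0 := fun n hn h => hcon n hn h
  -- z ≠ 0
  have hzne : z ≠ 0 := by
    intro h
    apply hcon' 1 one_pos
    rw [hysucc 0, hy0, h]
    exact (haddG_zero 0 h01).1
  have hr : 0 < ‖z‖ := norm_pos_iff.mpr hzne
  -- y is injective
  have hyinj : Function.Injective y := by
    intro i j hij
    by_contra hne
    rcases Nat.lt_or_ge i j with hlt | hge
    swap
    · have hlt : j < i := lt_of_le_of_ne hge (fun h => hne h.symm)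
      obtain ⟨wv, hwv1, hwv0⟩ := haddG_inv (y j) (hy1 j)
      apply hcon' (i - j) (by omega)
      have h1 : y i = addG (y (i - j)) (y j) := by
        rw [← hyadd (i - j) j, show i - j + j = i by omega]
      have : addG (y i) wv = 0 := by rw [hij]; exact hwv0
      rw [h1, haddG_assoc _ _ _ (hy1 _) (hy1 _) hwv1, hwv0] at this
      rw [← (haddG_zero (y (i - j)) (hy1 _)).2, this]
    · obtain ⟨wv, hwv1, hwv0⟩ := haddG_inv (y i) (hy1 i)
      apply hcon' (j - i) (by omega)
      have h1 : y j = addG (y (j - i)) (y i) := by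
        rw [← hyadd (j - i) i, show j - i + i = j by omega]
      have : addG (y j) wv = 0 := by rw [← hij]; exact hwv0
      rw [h1, haddG_assoc _ _ _ (hy1 _) (hy1 _) hwv1, hwv0] at this
      rw [← (haddG_zero (y (j - i)) (hy1 _)).2, this]
  -- find the dominant coefficient index N
  set r := ‖z‖ with hrdef
  set v : ℕ → ℝ := fun n => ‖a n‖ * r ^ n with hvdef
  obtain ⟨n₀, hn₀⟩ := ha_ne
  have hvn₀ : 0 < v n₀ := mul_pos (norm_pos_iff.mpr hn₀) (pow_pos hr _)
  have hvtend : Filter.Tendsto v Filter.atTop (nhds 0) := by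
    apply squeeze_zero (fun n => mul_nonneg (norm_nonneg _) (pow_nonneg hr.le _))
      (fun n => ?_) (tendsto_pow_atTop_nhds_zero_of_lt_one hr.le hz)
    calc ‖a n‖ * r ^ n ≤ 1 * r ^ n :=
          mul_le_mul_of_nonneg_right (ha_int n) (pow_nonneg hr.le _)
      _ = r ^ n := one_mul _
  obtain ⟨Kb, hKb⟩ := Filter.eventually_atTop.mp (hvtend.eventually_lt_const hvn₀)
  have hn₀Kb : n₀ < Kb := by
    by_contra h
    exact absurd (hKb n₀ (by omega)) (lt_irrefl _)
  set s : Finset ℕ := Finset.range Kb with hsdef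
  obtain ⟨b, hbs, hbmax⟩ : ∃ b ∈ s, ∀ m ∈ s, v m ≤ v b := by
    obtain ⟨b, hbs, hbmax⟩ := s.exists_max_image v ⟨n₀, by simp [hsdef, hn₀Kb]⟩
    exact ⟨b, hbs, hbmax⟩
  set T : Finset ℕ := s.filter (fun n => ∀ m ∈ s, v m ≤ v n) with hTdef
  have hbT : b ∈ T := by simp only [hTdef, Finset.mem_filter]; exact ⟨hbs, hbmax⟩
  have hTne : T.Nonempty := ⟨b, hbT⟩
  set N := T.max' hTne with hNdef
  have hNT : N ∈ T := T.max'_mem hTne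
  have hNs : N ∈ s := (Finset.mem_filter.mp hNT).1
  have hNmax : ∀ m ∈ s, v m ≤ v N := (Finset.mem_filter.mp hNT).2
  have hvN : 0 < v N := lt_of_lt_of_le hvn₀ (hNmax n₀ (by simp [hsdef, hn₀Kb]))
  have haN : a N ≠ 0 := by
    intro h
    rw [hvdef] at hvN
    simp only [h, norm_zero, zero_mul] at hvN
    exact absurd hvN (lt_irrefl _)
  have hdom : ∀ k, N < k → ‖a k‖ * r ^ k < ‖a N‖ * r ^ N := by
    intro k hk
    rcases Nat.lt_or_ge k Kb with hks | hks
    · have hle : v k ≤ v N := hNmax k (by simp [hsdef, hks])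
      rcases lt_or_eq_of_le hle with h | h
      · exact h
      · exfalso
        have hkT : k ∈ T := by
          simp only [hTdef, Finset.mem_filter]
          refine ⟨by simp [hsdef, hks], fun m hm => le_trans (hNmax m hm) (le_of_eq h.symm)⟩
        exact absurd (Finset.le_max' T k hkT) (by omega)
    · exact lt_of_lt_of_le (hKb k hks) (hNmax n₀ (by simp [hsdef, hn₀Kb]))
  -- apply Strassmann
  apply aux_strassmann N a r hr hz ha_int haN hdom (fun i : Fin (N + 1) => y i.val)
  · intro i j hij
    exact Fin.val_injective (hyinj hij)
  · exact fun i => hyr _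
  · intro i
    have := hF (y i.val) (hy1 _)
    rwa [hyF i.val] at this
end

section
/- Let ∂ be the invariant derivation of a one-dimensional formal group G over a field L of characteristic zero (so ∂ = (1/log_G'(x)) d/dx), and let P_m be the polynomials with Σ_m P_m(Y)Z^m = exp(Y log_G(Z)). Then for any formal power series f(x) ∈ C_p[[x]], the value of P_m(∂)f at x = 0 equals (1/m!) times the m-th derivative of f at 0. -/
open PowerSeries Polynomial Finset

namespace Stmt6Aux

variable {L : Type*} [Field L]

lemma coeff_pow_of_lt {a : PowerSeries L} (h0 : PowerSeries.coeff 0 a = 0)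
    {n k : ℕ} (h : n < k) : PowerSeries.coeff n (a ^ k) = 0 := by
  have hx : (PowerSeries.X : PowerSeries L) ∣ a := by
    rw [PowerSeries.X_dvd_iff, ← PowerSeries.coeff_zero_eq_constantCoeff_apply]
    exact h0
  have hxx : (PowerSeries.X : PowerSeries L) ^ k ∣ a ^ k := pow_dvd_pow_of_dvd hx k
  exact (PowerSeries.X_pow_dvd_iff.mp hxx) n h

lemma coeff_pow_self {a : PowerSeries L} (h0 : PowerSeries.coeff 0 a = 0)
    (h1 : PowerSeries.coeff 1 a = 1) :
    ∀ n, PowerSeries.coeff n (a ^ n) = 1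
  | 0 => by simp
  | n + 1 => by
    rw [pow_succ, PowerSeries.coeff_mul]
    rw [Finset.sum_eq_single (n, 1)]
    · rw [coeff_pow_self h0 h1 n, h1, one_mul]
    · rintro ⟨i, j⟩ hij hne
      rw [Finset.HasAntidiagonal.mem_antidiagonal] at hij
      rcases Nat.lt_or_ge i n with hi | hi
      · rw [coeff_pow_of_lt h0 hi, zero_mul]
      · have hne' : ¬(i = n ∧ j = 1) := fun ⟨ha, hb⟩ => hne (by rw [ha, hb])
        have hj : j = 0 := by omega
        subst hj
        rw [h0, mul_zero]
    · intro hmem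
      exact absurd (Finset.HasAntidiagonal.mem_antidiagonal.mpr (rfl : n + 1 = n + 1)) hmem

lemma coeff_derivativeFun' (f : PowerSeries L) (n : ℕ) :
    PowerSeries.coeff n f.derivativeFun = PowerSeries.coeff (n + 1) f * (n + 1) :=
  PowerSeries.coeff_derivative f n

lemma coeff_zero_derivativeFun_iterate (m : ℕ) : ∀ f : PowerSeries L,
    PowerSeries.coeff 0 ((fun g : PowerSeries L => g.derivativeFun)^[m] f)
      = (m.factorial : L) * PowerSeries.coeff m f := by
  induction m with
  | zero => intro f; simp
  | succ n ih =>
    intro f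
    rw [Function.iterate_succ_apply, ih, coeff_derivativeFun',
      Nat.factorial_succ]
    push_cast
    ring

/-- Coefficients of the compositional expansion of `f` in powers of `lam`,
defined by a triangular recursion. -/
noncomputable def invc (lam f : PowerSeries L) (n : ℕ) : L :=
  PowerSeries.coeff n f -
    ∑ k ∈ (Finset.range n).attach,
      invc lam f k.1 * PowerSeries.coeff n (lam ^ (k.1 : ℕ))
decreasing_by exact Finset.mem_range.mp k.2

lemma invc_def (lam f : PowerSeries L) (n : ℕ) :
    invc lam f n = PowerSeries.coeff n f -
      ∑ k ∈ Finset.range n, invc lam f k * PowerSeries.coeff n (lam ^ k) := by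
  rw [invc]
  exact congrArg (fun s => PowerSeries.coeff n f - s)
    (Finset.sum_attach (Finset.range n)
      (fun k => invc lam f k * PowerSeries.coeff n (lam ^ k)))

lemma coeff_sum_invc {lam : PowerSeries L} (h0 : PowerSeries.coeff 0 lam = 0)
    (h1 : PowerSeries.coeff 1 lam = 1) (f : PowerSeries L) {m n : ℕ} (hn : n ≤ m) :
    PowerSeries.coeff n (∑ k ∈ Finset.range (m + 1), invc lam f k • lam ^ k)
      = PowerSeries.coeff n f := by
  rw [map_sum]
  simp only [map_smul, smul_eq_mul]
  rw [← Finset.sum_subset (Finset.range_subset_range.mpr (by omega) :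
      Finset.range (n + 1) ⊆ Finset.range (m + 1))]
  · rw [Finset.sum_range_succ, coeff_pow_self h0 h1 n, mul_one, invc_def]
    ring
  · intro k hk hkn
    rw [Finset.mem_range] at hkn
    rw [coeff_pow_of_lt h0 (by omega), mul_zero]

end Stmt6Aux

open Stmt6Aux in
/-- Let `∂` be the invariant derivation of a one-dimensional formal
group `G` over a field `L` of characteristic zero, i.e. `∂f = f' / log_G'` (as formal
power series), and let `P_m` be the polynomials with `Σ_m P_m(Y)Z^m = exp(Y log_G(Z))`.
Then for any formal power series `f`, the value of `P_m(∂)f` at `x = 0` (its constant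
coefficient) equals `(1/m!)` times the `m`-th derivative of `f` at `0`. -/
theorem stmt_6 (L : Type*) [Field L] [CharZero L]
    (lam : PowerSeries L) (hlam0 : PowerSeries.coeff 0 lam = 0)
    (hlam1 : PowerSeries.coeff 1 lam = 1)
    (P : ℕ → Polynomial L)
    (hP : ∀ m : ℕ, P m = ∑ k ∈ range (m + 1),
      Polynomial.C (PowerSeries.coeff m (lam ^ k) * ((k.factorial : L)⁻¹)) *
        Polynomial.X ^ k)
    -- the invariant derivation `∂f = f' · (log_G')⁻¹`
    (D : PowerSeries L → PowerSeries L)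
    (hD : ∀ f : PowerSeries L, D f = f.derivativeFun * (lam.derivativeFun)⁻¹)
    (f : PowerSeries L) (m : ℕ) :
    PowerSeries.coeff 0 ((P m).sum fun k c => c • D^[k] f) =
      (m.factorial : L)⁻¹ * PowerSeries.coeff 0 ((fun g => g.derivativeFun)^[m] f) := by
  classical
  -- lam' is invertible
  have hunit : lam.derivativeFun * (lam.derivativeFun)⁻¹ = 1 := by
    apply PowerSeries.mul_inv_cancel
    rw [← PowerSeries.coeff_zero_eq_constantCoeff_apply, coeff_derivativeFun',
      hlam1]
    simp
  -- D is linear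
  let Dl : PowerSeries L →ₗ[L] PowerSeries L :=
    { toFun := D
      map_add' := fun a b => by
        rw [hD, hD, hD, PowerSeries.derivativeFun_add, add_mul]
      map_smul' := fun r a => by
        show D (r • a) = (RingHom.id L) r • D a
        rw [hD, hD, PowerSeries.derivativeFun_smul, RingHom.id_apply, smul_mul_assoc] }
  have hDl : ∀ (k : ℕ) (g : PowerSeries L), D^[k] g = (Dl ^ k) g := fun k g =>
    (Module.End.pow_apply Dl k g).symm
  -- derivative of powers of lam
  have hdpow : ∀ n : ℕ, (lam ^ (n + 1)).derivativeFun
      = ((n + 1 : ℕ) : L) • (lam ^ n * lam.derivativeFun) := by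
    intro n
    induction n with
    | zero => simp
    | succ n ih =>
      rw [pow_succ, PowerSeries.derivativeFun_mul, ih]
      rw [smul_eq_mul, smul_eq_mul, mul_smul_comm, ← mul_assoc, ← pow_succ']
      have hc2 : ((n + 1 + 1 : ℕ) : L) = ((n + 1 : ℕ) : L) + 1 := by push_cast; ring
      rw [hc2, add_smul, one_smul, add_comm]
  have hDpow : ∀ n : ℕ, D (lam ^ n) = ((n : ℕ) : L) • lam ^ (n - 1) := by
    intro n
    cases n with
    | zero =>
      rw [hD, pow_zero, PowerSeries.derivativeFun_one, zero_mul]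
      simp
    | succ n =>
      rw [hD, hdpow, smul_mul_assoc, mul_assoc, hunit, mul_one]
      simp
  have hDsmul : ∀ (r : L) (g : PowerSeries L), D (r • g) = r • D g := fun r g =>
    Dl.map_smul r g
  have hDiter : ∀ j k : ℕ, D^[j] (lam ^ k)
      = ((k.descFactorial j : ℕ) : L) • lam ^ (k - j) := by
    intro j
    induction j with
    | zero => intro k; simp
    | succ j ih =>
      intro k
      rw [Function.iterate_succ_apply', ih k, hDsmul, hDpow, smul_smul, Nat.sub_sub,
        Nat.descFactorial_succ, Nat.cast_mul, mul_comm]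
  have hcoeff0 : ∀ j k : ℕ, PowerSeries.coeff 0 (D^[j] (lam ^ k))
      = if j = k then (k.factorial : L) else 0 := by
    intro j k
    rw [hDiter, map_smul, smul_eq_mul]
    rcases lt_trichotomy j k with h | h | h
    · rw [if_neg h.ne, coeff_pow_of_lt hlam0 (by omega), mul_zero]
    · subst h
      rw [if_pos rfl, Nat.descFactorial_self, Nat.sub_self, pow_zero]
      simp
    · rw [if_neg h.ne', Nat.descFactorial_eq_zero_iff_lt.mpr h, Nat.cast_zero, zero_mul]
  -- vanishing lemma
  have hstep : ∀ (g : PowerSeries L) (r : ℕ), (∀ i ≤ r + 1, PowerSeries.coeff i g = 0) →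
      ∀ i ≤ r, PowerSeries.coeff i (D g) = 0 := by
    intro g r hg i hi
    rw [hD, PowerSeries.coeff_mul]
    apply Finset.sum_eq_zero
    rintro ⟨p, q⟩ hpq
    rw [Finset.HasAntidiagonal.mem_antidiagonal] at hpq
    have hp : PowerSeries.coeff p g.derivativeFun = 0 := by
      rw [coeff_derivativeFun', hg (p + 1) (by omega), zero_mul]
    rw [hp, zero_mul]
  have hvan : ∀ (j : ℕ) (g : PowerSeries L), (∀ i ≤ j, PowerSeries.coeff i g = 0) →
      PowerSeries.coeff 0 (D^[j] g) = 0 := by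
    intro j
    induction j with
    | zero => intro g hg; exact hg 0 le_rfl
    | succ j ih =>
      intro g hg
      rw [Function.iterate_succ_apply]
      exact ih (D g) (hstep g j hg)
  -- the approximating series h
  set c : ℕ → L := invc lam f with hc
  set h : PowerSeries L := ∑ k ∈ Finset.range (m + 1), c k • lam ^ k with hh
  have hcoeffh : ∀ {n : ℕ}, n ≤ m → PowerSeries.coeff n h = PowerSeries.coeff n f :=
    fun {n} hn => coeff_sum_invc hlam0 hlam1 f hn
  -- compute coeff 0 (D^[k] f) for k ≤ m
  have hDf : ∀ k ≤ m, PowerSeries.coeff 0 (D^[k] f) = c k * (k.factorial : L) := by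
    intro k hk
    have hsplit : D^[k] f = D^[k] h + D^[k] (f - h) := by
      rw [hDl, hDl, hDl, ← map_add, add_sub_cancel]
    have hzero : PowerSeries.coeff 0 (D^[k] (f - h)) = 0 := by
      apply hvan
      intro i hi
      rw [map_sub, hcoeffh (le_trans hi hk), sub_self]
    have hhterm : PowerSeries.coeff 0 (D^[k] h) = c k * (k.factorial : L) := by
      rw [hDl, hh, map_sum]
      rw [map_sum]
      have : ∀ j ∈ Finset.range (m + 1),
          PowerSeries.coeff 0 ((Dl ^ k) (c j • lam ^ j))
            = c j * (if k = j then (j.factorial : L) else 0) := by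
        intro j hj
        rw [map_smul, map_smul, smul_eq_mul, ← hDl, hcoeff0]
      rw [Finset.sum_congr rfl this]
      simp only [mul_ite, mul_zero]
      rw [Finset.sum_ite_eq (Finset.range (m + 1)) k (fun j => c j * (j.factorial : L)),
        if_pos (Finset.mem_range.mpr (by omega))]
    rw [hsplit, map_add, hzero, add_zero, hhterm]
  -- coefficients of P m
  have hPc : ∀ j, (P m).coeff j =
      if j < m + 1 then PowerSeries.coeff m (lam ^ j) * ((j.factorial : L)⁻¹) else 0 := by
    intro j
    rw [hP, Polynomial.finset_sum_coeff]
    simp only [Polynomial.coeff_C_mul, Polynomial.coeff_X_pow, mul_ite, mul_one, mul_zero]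
    rw [Finset.sum_ite_eq (Finset.range (m + 1)) j
      (fun k => PowerSeries.coeff m (lam ^ k) * ((k.factorial : L)⁻¹))]
    simp only [Finset.mem_range]
  have hsupp : (P m).support ⊆ Finset.range (m + 1) := by
    intro k hk
    rw [Polynomial.mem_support_iff] at hk
    rw [Finset.mem_range]
    by_contra hkm
    exact hk (by rw [hPc k, if_neg hkm])
  -- expand the polynomial sum
  have hsum : PowerSeries.coeff 0 ((P m).sum fun k cc => cc • D^[k] f)
      = ∑ k ∈ Finset.range (m + 1),
          (PowerSeries.coeff m (lam ^ k) * ((k.factorial : L)⁻¹))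
            * PowerSeries.coeff 0 (D^[k] f) := by
    rw [Polynomial.sum_def, Finset.sum_subset hsupp
      (fun k _ hks => by rw [Polynomial.notMem_support_iff.mp hks, zero_smul])]
    rw [map_sum]
    apply Finset.sum_congr rfl
    intro k hk
    rw [map_smul, smul_eq_mul, hPc k, if_pos (Finset.mem_range.mp hk)]
  have hmain : PowerSeries.coeff 0 ((P m).sum fun k cc => cc • D^[k] f)
      = PowerSeries.coeff m f := by
    rw [hsum]
    have : ∀ k ∈ Finset.range (m + 1),
        (PowerSeries.coeff m (lam ^ k) * ((k.factorial : L)⁻¹))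
          * PowerSeries.coeff 0 (D^[k] f)
        = c k * PowerSeries.coeff m (lam ^ k) := by
      intro k hk
      rw [hDf k (Nat.lt_succ_iff.mp (Finset.mem_range.mp hk))]
      have hfac : ((k.factorial : L)) ≠ 0 := by
        exact_mod_cast Nat.cast_ne_zero.mpr k.factorial_ne_zero
      field_simp
    rw [Finset.sum_congr rfl this]
    rw [← hcoeffh (le_refl m), hh, map_sum]
    apply Finset.sum_congr rfl
    intro k hk
    rw [map_smul, smul_eq_mul]
  rw [hmain, coeff_zero_derivativeFun_iterate, ← mul_assoc, inv_mul_cancel₀, one_mul]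
  exact_mod_cast Nat.cast_ne_zero.mpr m.factorial_ne_zero
end

section
/- The formal Taylor formula for a one-dimensional formal group: for a formal group G over a characteristic-zero field with logarithm log_G and exponential exp_G, and any power series f, one has exp(∂ · log_G(y)) f(x) = f(x +_G y) as formal power series in x and y, where ∂ is the invariant derivation of G. -/
open PowerSeries Polynomial Finset

namespace Stmt7Aux

variable {K : Type*} [Field K]

noncomputable def pr (i j : ℕ) : Fin 2 →₀ ℕ := Finsupp.single 0 i + Finsupp.single 1 j

@[simp] lemma pr_app0 (i j : ℕ) : pr i j 0 = i := by
  simp [pr, Finsupp.single_apply]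

@[simp] lemma pr_app1 (i j : ℕ) : pr i j 1 = j := by
  simp [pr, Finsupp.single_apply]

lemma pr_eq (d : Fin 2 →₀ ℕ) : d = pr (d 0) (d 1) := by
  ext x
  fin_cases x <;> simp

lemma pr_zero_zero : pr 0 0 = 0 := by
  ext x; fin_cases x <;> simp

lemma coeff_mul_pr (u v : MvPowerSeries (Fin 2) K) (d : Fin 2 →₀ ℕ) :
    MvPowerSeries.coeff d (u * v) =
      ∑ ij ∈ range (d 0 + 1) ×ˢ range (d 1 + 1),
        MvPowerSeries.coeff (pr ij.1 ij.2) u *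
          MvPowerSeries.coeff (pr (d 0 - ij.1) (d 1 - ij.2)) v := by
  rw [MvPowerSeries.coeff_mul]
  refine Finset.sum_nbij' (i := fun e => ((e.1 0, e.1 1) : ℕ × ℕ))
    (j := fun ij => (pr ij.1 ij.2, pr (d 0 - ij.1) (d 1 - ij.2))) ?_ ?_ ?_ ?_ ?_
  · rintro ⟨e1, e2⟩ he
    rw [Finset.HasAntidiagonal.mem_antidiagonal] at he
    have h0 : e1 0 + e2 0 = d 0 := by rw [← Finsupp.add_apply, he]
    have h1 : e1 1 + e2 1 = d 1 := by rw [← Finsupp.add_apply, he]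
    simp only [mem_product, mem_range]
    omega
  · rintro ⟨i, j⟩ hij
    simp only [mem_product, mem_range] at hij
    rw [Finset.HasAntidiagonal.mem_antidiagonal]
    ext x
    fin_cases x <;> simp <;> omega
  · rintro ⟨e1, e2⟩ he
    rw [Finset.HasAntidiagonal.mem_antidiagonal] at he
    have h0 : e1 0 + e2 0 = d 0 := by rw [← Finsupp.add_apply, he]
    have h1 : e1 1 + e2 1 = d 1 := by rw [← Finsupp.add_apply, he]
    simp only [Prod.mk.injEq]
    constructor
    · exact (pr_eq e1).symm
    · rw [pr_eq e2]
      congr 1 <;> omega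
  · rintro ⟨i, j⟩ hij
    simp
  · rintro ⟨e1, e2⟩ he
    rw [Finset.HasAntidiagonal.mem_antidiagonal] at he
    have h0 : e1 0 + e2 0 = d 0 := by rw [← Finsupp.add_apply, he]
    have h1 : e1 1 + e2 1 = d 1 := by rw [← Finsupp.add_apply, he]
    have he1 : pr (e1 0) (e1 1) = e1 := (pr_eq e1).symm
    have he2 : pr (d 0 - e1 0) (d 1 - e1 1) = e2 := by
      rw [pr_eq e2]; congr 1 <;> omega
    simp only [he1, he2]

lemma coeff_pow_eq_zero {FG : MvPowerSeries (Fin 2) K}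
    (hFG0 : MvPowerSeries.constantCoeff FG = 0) :
    ∀ n (d : Fin 2 →₀ ℕ), d 0 + d 1 < n → MvPowerSeries.coeff d (FG ^ n) = 0 := by
  intro n
  induction n with
  | zero => intro d hd; omega
  | succ n ih =>
    intro d hd
    rw [pow_succ', coeff_mul_pr]
    apply Finset.sum_eq_zero
    rintro ⟨i, j⟩ hij
    simp only [mem_product, mem_range] at hij
    by_cases h0 : i = 0 ∧ j = 0
    · obtain ⟨rfl, rfl⟩ := h0
      rw [pr_zero_zero, MvPowerSeries.coeff_zero_eq_constantCoeff, hFG0, zero_mul]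
    · rw [ih _ (by simp only [pr_app0, pr_app1]; omega), mul_zero]


/-- The coefficient of `f(FG)`. -/
noncomputable def subCoeff (FG : MvPowerSeries (Fin 2) K) (f : PowerSeries K)
    (d : Fin 2 →₀ ℕ) : K :=
  ∑ n ∈ range (d 0 + d 1 + 1), PowerSeries.coeff n f * MvPowerSeries.coeff d (FG ^ n)

variable {FG : MvPowerSeries (Fin 2) K}
  (hFG0 : MvPowerSeries.constantCoeff FG = 0)

include hFG0

lemma coeff_aeval (p : Polynomial K) (d : Fin 2 →₀ ℕ) :
    MvPowerSeries.coeff d (Polynomial.aeval FG p) =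
      ∑ n ∈ range (d 0 + d 1 + 1), p.coeff n * MvPowerSeries.coeff d (FG ^ n) := by
  rw [Polynomial.aeval_eq_sum_range, map_sum]
  simp_rw [LinearMap.map_smul, smul_eq_mul]
  set M := max (p.natDegree + 1) (d 0 + d 1 + 1) with hM
  rw [Finset.sum_subset (Finset.range_subset_range.2 (le_max_left _ _ : p.natDegree + 1 ≤ M)),
    Finset.sum_subset (Finset.range_subset_range.2 (le_max_right _ _ : d 0 + d 1 + 1 ≤ M))]
  · intro x _ hx
    rw [coeff_pow_eq_zero hFG0 x d (by simpa using hx), mul_zero]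
  · intro x _ hx
    rw [Polynomial.coeff_eq_zero_of_natDegree_lt (by simp at hx; omega), zero_mul]

lemma subCoeff_eq_aeval (f : PowerSeries K) (d : Fin 2 →₀ ℕ) :
    subCoeff FG f d =
      MvPowerSeries.coeff d (Polynomial.aeval FG (trunc (d 0 + d 1 + 1) f)) := by
  rw [coeff_aeval hFG0]
  apply Finset.sum_congr rfl
  intro n hn
  rw [coeff_trunc, if_pos (by simpa using hn)]

lemma coeff_aeval_trunc (f : PowerSeries K) {N : ℕ} (d : Fin 2 →₀ ℕ)
    (hN : d 0 + d 1 < N) :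
    MvPowerSeries.coeff d (Polynomial.aeval FG (trunc N f)) = subCoeff FG f d := by
  rw [coeff_aeval hFG0, subCoeff]
  apply Finset.sum_congr rfl
  intro n hn
  rw [coeff_trunc, if_pos (by simp at hn; omega)]

lemma subCoeff_mul (f g : PowerSeries K) (d : Fin 2 →₀ ℕ) :
    subCoeff FG (f * g) d =
      ∑ ij ∈ range (d 0 + 1) ×ˢ range (d 1 + 1),
        subCoeff FG f (pr ij.1 ij.2) * subCoeff FG g (pr (d 0 - ij.1) (d 1 - ij.2)) := by
  set N := d 0 + d 1 + 1 with hN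
  have h1 : subCoeff FG (f * g) d =
      MvPowerSeries.coeff d (Polynomial.aeval FG (trunc N f * trunc N g)) := by
    rw [subCoeff_eq_aeval hFG0, coeff_aeval hFG0, coeff_aeval hFG0]
    apply Finset.sum_congr rfl
    intro n hn
    simp only [mem_range] at hn
    congr 1
    rw [coeff_trunc, if_pos hn, PowerSeries.coeff_mul, Polynomial.coeff_mul]
    apply Finset.sum_congr rfl
    rintro ⟨a, b⟩ hab
    rw [Finset.HasAntidiagonal.mem_antidiagonal] at hab
    rw [coeff_trunc, coeff_trunc, if_pos (by omega), if_pos (by omega)]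
  rw [h1, map_mul, coeff_mul_pr]
  apply Finset.sum_congr rfl
  rintro ⟨i, j⟩ hij
  simp only [mem_product, mem_range] at hij
  rw [coeff_aeval_trunc hFG0 f _ (by simp; omega),
    coeff_aeval_trunc hFG0 g _ (by simp; omega)]


omit hFG0

/-- `g(x)` as a power series in two variables. -/
noncomputable def emb0 (g : PowerSeries K) : MvPowerSeries (Fin 2) K :=
  fun d => if d 1 = 0 then PowerSeries.coeff (d 0) g else 0

/-- `g(y)` as a power series in two variables. -/
noncomputable def emb1 (g : PowerSeries K) : MvPowerSeries (Fin 2) K :=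
  fun d => if d 0 = 0 then PowerSeries.coeff (d 1) g else 0

lemma coeff_emb0 (g : PowerSeries K) (d : Fin 2 →₀ ℕ) :
    MvPowerSeries.coeff d (emb0 g) =
      if d 1 = 0 then PowerSeries.coeff (d 0) g else 0 := rfl

lemma coeff_emb1 (g : PowerSeries K) (d : Fin 2 →₀ ℕ) :
    MvPowerSeries.coeff d (emb1 g) =
      if d 0 = 0 then PowerSeries.coeff (d 1) g else 0 := rfl

lemma emb0_mul (g h : PowerSeries K) : emb0 (g * h) = emb0 g * emb0 h := by
  apply MvPowerSeries.ext
  intro d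
  rw [coeff_mul_pr, coeff_emb0]
  by_cases hd : d 1 = 0
  · rw [if_pos hd, hd, PowerSeries.coeff_mul, Finset.Nat.sum_antidiagonal_eq_sum_range_succ_mk,
      Finset.sum_product]
    simp [coeff_emb0]
  · rw [if_neg hd]
    symm
    apply Finset.sum_eq_zero
    rintro ⟨i, j⟩ hij
    simp only [mem_product, mem_range] at hij
    by_cases hj : j = 0
    · subst hj
      rw [coeff_emb0 h, pr_app1, if_neg (by omega), mul_zero]
    · rw [coeff_emb0 g, pr_app1, if_neg hj, zero_mul]

lemma emb1_mul (g h : PowerSeries K) : emb1 (g * h) = emb1 g * emb1 h := by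
  apply MvPowerSeries.ext
  intro d
  rw [coeff_mul_pr, coeff_emb1]
  by_cases hd : d 0 = 0
  · rw [if_pos hd, hd, PowerSeries.coeff_mul, Finset.Nat.sum_antidiagonal_eq_sum_range_succ_mk,
      Finset.sum_product]
    simp [coeff_emb1]
  · rw [if_neg hd]
    symm
    apply Finset.sum_eq_zero
    rintro ⟨i, j⟩ hij
    simp only [mem_product, mem_range] at hij
    by_cases hi : i = 0
    · subst hi
      rw [coeff_emb1 h, pr_app0, if_neg (by omega), mul_zero]
    · rw [coeff_emb1 g, pr_app0, if_neg hi, zero_mul]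

lemma emb0_one : emb0 (1 : PowerSeries K) = 1 := by
  apply MvPowerSeries.ext
  intro d
  rw [coeff_emb0, MvPowerSeries.coeff_one, PowerSeries.coeff_one]
  by_cases h1 : d 1 = 0 <;> by_cases h0 : d 0 = 0
  · rw [if_pos h1, if_pos h0, if_pos]
    rw [pr_eq d, h0, h1, pr_zero_zero]
  · rw [if_pos h1, if_neg h0, if_neg]
    intro h; apply h0; rw [h]; simp
  · rw [if_neg h1, if_neg]
    intro h; apply h1; rw [h]; simp
  · rw [if_neg h1, if_neg]
    intro h; apply h1; rw [h]; simp

lemma emb1_one : emb1 (1 : PowerSeries K) = 1 := by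
  apply MvPowerSeries.ext
  intro d
  rw [coeff_emb1, MvPowerSeries.coeff_one, PowerSeries.coeff_one]
  by_cases h1 : d 0 = 0 <;> by_cases h0 : d 1 = 0
  · rw [if_pos h1, if_pos h0, if_pos]
    rw [pr_eq d, h0, h1, pr_zero_zero]
  · rw [if_pos h1, if_neg h0, if_neg]
    intro h; apply h0; rw [h]; simp
  · rw [if_neg h1, if_neg]
    intro h; apply h1; rw [h]; simp
  · rw [if_neg h1, if_neg]
    intro h; apply h1; rw [h]; simp

lemma emb0_pow (g : PowerSeries K) : ∀ k, emb0 (g ^ k) = (emb0 g) ^ k := by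
  intro k
  induction k with
  | zero => simpa using emb0_one
  | succ k ih => rw [pow_succ, pow_succ, emb0_mul, ih]

lemma emb1_pow (g : PowerSeries K) : ∀ k, emb1 (g ^ k) = (emb1 g) ^ k := by
  intro k
  induction k with
  | zero => simpa using emb1_one
  | succ k ih => rw [pow_succ, pow_succ, emb1_mul, ih]

lemma coeff_emb0_mul_emb1 (g h : PowerSeries K) (d : Fin 2 →₀ ℕ) :
    MvPowerSeries.coeff d (emb0 g * emb1 h) =
      PowerSeries.coeff (d 0) g * PowerSeries.coeff (d 1) h := by
  rw [coeff_mul_pr]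
  rw [Finset.sum_eq_single_of_mem ((d 0, 0) : ℕ × ℕ)]
  · simp [coeff_emb0, coeff_emb1]
  · simp
  · rintro ⟨i, j⟩ hij hne
    simp only [mem_product, mem_range] at hij
    by_cases hj : j = 0
    · subst hj
      have hi : i ≠ d 0 := by
        intro h; exact hne (by rw [h])
      rw [coeff_emb1, pr_app0, if_neg (by omega), mul_zero]
    · rw [coeff_emb0, pr_app1, if_neg hj, zero_mul]


/-- Substitution of `FG` into `f`, as a two-variable power series. -/
noncomputable def Sub (FG : MvPowerSeries (Fin 2) K) (f : PowerSeries K) :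
    MvPowerSeries (Fin 2) K :=
  fun d => subCoeff FG f d

lemma coeff_Sub (FG : MvPowerSeries (Fin 2) K) (f : PowerSeries K) (d : Fin 2 →₀ ℕ) :
    MvPowerSeries.coeff d (Sub FG f) = subCoeff FG f d := rfl

include hFG0

lemma Sub_mul (f g : PowerSeries K) : Sub FG (f * g) = Sub FG f * Sub FG g := by
  apply MvPowerSeries.ext
  intro d
  rw [coeff_Sub, subCoeff_mul hFG0, coeff_mul_pr]
  rfl

omit hFG0 in
lemma Sub_one : Sub FG (1 : PowerSeries K) = 1 := by
  apply MvPowerSeries.ext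
  intro d
  rw [coeff_Sub, subCoeff, Finset.sum_eq_single 0]
  · simp
  · intro n _ hn
    rw [PowerSeries.coeff_one, if_neg hn, zero_mul]
  · intro h
    simp at h

lemma Sub_pow (f : PowerSeries K) : ∀ k, Sub FG (f ^ k) = (Sub FG f) ^ k := by
  intro k
  induction k with
  | zero => simpa using Sub_one (FG := FG)
  | succ k ih => rw [pow_succ, pow_succ, Sub_mul hFG0, ih]

lemma subCoeff_lam_pow {lam : PowerSeries K}
    (hlog : Sub FG lam = emb0 lam + emb1 lam) (k : ℕ) (d : Fin 2 →₀ ℕ) :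
    subCoeff FG (lam ^ k) d = ∑ j ∈ range (k + 1),
      (k.choose j : K) * (PowerSeries.coeff (d 0) (lam ^ j) *
        PowerSeries.coeff (d 1) (lam ^ (k - j))) := by
  rw [← coeff_Sub, Sub_pow hFG0, hlog, add_pow, map_sum]
  apply Finset.sum_congr rfl
  intro j hj
  rw [← emb0_pow, ← emb1_pow, mul_comm _ ((k.choose j : MvPowerSeries (Fin 2) K)),
    ← nsmul_eq_mul, map_nsmul, coeff_emb0_mul_emb1, nsmul_eq_mul]

omit hFG0

lemma coeff_pow_lt {lam : PowerSeries K} (hlam0 : PowerSeries.coeff 0 lam = 0) :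
    ∀ k n, n < k → PowerSeries.coeff n (lam ^ k) = 0 := by
  intro k
  induction k with
  | zero => intro n h; exact absurd h (Nat.not_lt_zero n)
  | succ k ih =>
    intro n hn
    rw [pow_succ, PowerSeries.coeff_mul]
    apply Finset.sum_eq_zero
    rintro ⟨a, b⟩ hab
    rw [Finset.HasAntidiagonal.mem_antidiagonal] at hab
    by_cases ha : a < k
    · rw [ih a ha, zero_mul]
    · have hb : b = 0 := by omega
      rw [hb, hlam0, mul_zero]

lemma coeff_pow_self {lam : PowerSeries K} (hlam0 : PowerSeries.coeff 0 lam = 0)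
    (hlam1 : PowerSeries.coeff 1 lam = 1) :
    ∀ k, PowerSeries.coeff k (lam ^ k) = 1 := by
  intro k
  induction k with
  | zero => simp
  | succ k ih =>
    rw [pow_succ, PowerSeries.coeff_mul, Finset.sum_eq_single ((k, 1) : ℕ × ℕ)]
    · rw [ih, hlam1, one_mul]
    · rintro ⟨a, b⟩ hab hne
      rw [Finset.HasAntidiagonal.mem_antidiagonal] at hab
      have hne' : ¬(a = k ∧ b = 1) := by
        rintro ⟨rfl, rfl⟩; exact hne rfl
      by_cases ha : a < k
      · rw [coeff_pow_lt hlam0 k a ha, zero_mul]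
      · have hb : b = 0 := by omega
        rw [hb, hlam0, mul_zero]
    · intro h
      simp at h


section D

variable {lam : PowerSeries K} {D : PowerSeries K → PowerSeries K}
    (hD : ∀ f : PowerSeries K, D f = f.derivativeFun * (lam.derivativeFun)⁻¹)

lemma derivativeFun_pow (lam : PowerSeries K) :
    ∀ k : ℕ, (lam ^ (k + 1)).derivativeFun =
      (((k + 1 : ℕ)) : K) • (lam ^ k * lam.derivativeFun) := by
  intro k
  induction k with
  | zero => simp
  | succ k ih =>
    rw [pow_succ, derivativeFun_mul, ih, smul_eq_mul, smul_eq_mul, mul_smul_comm,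
      ← mul_assoc, ← pow_succ']
    have hc : ((k + 1 + 1 : ℕ) : K) = 1 + ((k + 1 : ℕ) : K) := by push_cast; ring
    rw [hc, add_smul, one_smul]

include hD

lemma D_add (f g : PowerSeries K) : D (f + g) = D f + D g := by
  rw [hD, hD, hD, derivativeFun_add, add_mul]

lemma D_smul (c : K) (f : PowerSeries K) : D (c • f) = c • D f := by
  rw [hD, hD, derivativeFun_smul, smul_mul_assoc]

lemma D_zero : D 0 = 0 := by
  have h := D_smul hD 0 0
  rwa [zero_smul, zero_smul] at h

lemma Diter_add (m : ℕ) : ∀ f g, D^[m] (f + g) = D^[m] f + D^[m] g := by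
  induction m with
  | zero => intro f g; simp
  | succ m ih =>
    intro f g
    rw [Function.iterate_succ_apply, Function.iterate_succ_apply,
      Function.iterate_succ_apply, D_add hD, ih]

lemma Diter_smul (m : ℕ) : ∀ (c : K) f, D^[m] (c • f) = c • D^[m] f := by
  induction m with
  | zero => intro c f; simp
  | succ m ih =>
    intro c f
    rw [Function.iterate_succ_apply, Function.iterate_succ_apply, D_smul hD, ih]

lemma Diter_zero (m : ℕ) : D^[m] (0 : PowerSeries K) = 0 := by
  have h := Diter_smul hD m 0 0
  rwa [zero_smul, zero_smul] at h

lemma Diter_sum {α : Type*} (m : ℕ) (s : Finset α) (c : α → K) (g : α → PowerSeries K) :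
    D^[m] (∑ a ∈ s, c a • g a) = ∑ a ∈ s, c a • D^[m] (g a) := by
  classical
  induction s using Finset.induction_on with
  | empty => simpa using Diter_zero hD m
  | insert a s hni ih =>
    rw [Finset.sum_insert hni, Finset.sum_insert hni, Diter_add hD, Diter_smul hD, ih]

lemma D_lam_pow (hinv : lam.derivativeFun * (lam.derivativeFun)⁻¹ = 1) (k : ℕ) :
    D (lam ^ (k + 1)) = (((k + 1 : ℕ)) : K) • lam ^ k := by
  rw [hD, derivativeFun_pow, smul_mul_assoc, mul_assoc, hinv, mul_one]

lemma Diter_lam_pow (hinv : lam.derivativeFun * (lam.derivativeFun)⁻¹ = 1) :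
    ∀ m k, D^[m] (lam ^ k) = ((k.descFactorial m : ℕ) : K) • lam ^ (k - m) := by
  intro m
  induction m with
  | zero => intro k; simp
  | succ m ih =>
    intro k
    rw [Function.iterate_succ_apply]
    match k with
    | 0 =>
      rw [pow_zero]
      have hone : D (1 : PowerSeries K) = 0 := by
        rw [hD, derivativeFun_one, zero_mul]
      rw [hone, Diter_zero hD, Nat.zero_descFactorial_succ]
      simp
    | k + 1 =>
      rw [D_lam_pow hD hinv, Diter_smul hD, ih, smul_smul, Nat.succ_descFactorial_succ,
        Nat.succ_sub_succ, Nat.cast_mul]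

lemma coeff_D_eq_zero (f : PowerSeries K) (j : ℕ)
    (h : ∀ n, n ≤ j + 1 → PowerSeries.coeff n f = 0) :
    ∀ n, n ≤ j → PowerSeries.coeff n (D f) = 0 := by
  intro n hn
  rw [hD, PowerSeries.coeff_mul]
  apply Finset.sum_eq_zero
  rintro ⟨a, b⟩ hab
  rw [Finset.HasAntidiagonal.mem_antidiagonal] at hab
  rw [show f.derivativeFun = PowerSeries.derivative K f from rfl, PowerSeries.coeff_derivative, h (a + 1) (by omega), zero_mul, zero_mul]

lemma coeff_Diter_eq_zero :
    ∀ (m : ℕ) (f : PowerSeries K) (j : ℕ),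
      (∀ n, n ≤ j + m → PowerSeries.coeff n f = 0) →
      ∀ n, n ≤ j → PowerSeries.coeff n (D^[m] f) = 0 := by
  intro m
  induction m with
  | zero => intro f j h n hn; simpa using h n (by omega)
  | succ m ih =>
    intro f j h n hn
    rw [Function.iterate_succ_apply]
    exact ih (D f) j (fun n' hn' => coeff_D_eq_zero hD f (j + m) (fun i hi => h i (by omega)) n' hn') n hn

end D

/-- Coefficients of `f` in the "basis" `lam ^ k`. -/
noncomputable def cseq (lam f : PowerSeries K) : ℕ → K
  | n => PowerSeries.coeff n f - ∑ k ∈ (Finset.range n).attach,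
      cseq lam f k.1 * PowerSeries.coeff n (lam ^ k.1)
decreasing_by exact Finset.mem_range.mp k.2

lemma cseq_spec {lam : PowerSeries K} (hlam0 : PowerSeries.coeff 0 lam = 0)
    (hlam1 : PowerSeries.coeff 1 lam = 1) (f : PowerSeries K) (n : ℕ) :
    PowerSeries.coeff n f =
      ∑ k ∈ range (n + 1), cseq lam f k * PowerSeries.coeff n (lam ^ k) := by
  rw [Finset.sum_range_succ, coeff_pow_self hlam0 hlam1, mul_one, cseq,
    Finset.sum_attach (range n) (fun k => cseq lam f k * PowerSeries.coeff n (lam ^ k))]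
  ring

end Stmt7Aux

open Stmt7Aux

/-- The formal Taylor formula for a one-dimensional formal group:
for a formal group law `FG(x,y)` (a two-variable power series with zero constant term)
over a characteristic-zero field, with normalized logarithm `lam` (so that formally
`lam(FG(x,y)) = lam(x) + lam(y)`, stated coefficientwise), and invariant derivation
`∂f = f'/lam'`, one has `exp(∂·lam(y)) f(x) = f(x +_G y)`; comparing coefficients of
`x^{d₀} y^{d₁}`, the coefficient of `f(FG(x,y))` equals the `x^{d₀}`-coefficient of
`P_{d₁}(∂)f`, where `Σ_m P_m(Y)Z^m = exp(Y·lam(Z))`. -/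
theorem stmt_7 (K : Type*) [Field K] [CharZero K]
    (lam : PowerSeries K) (hlam0 : PowerSeries.coeff 0 lam = 0)
    (hlam1 : PowerSeries.coeff 1 lam = 1)
    (FG : MvPowerSeries (Fin 2) K) (hFG0 : MvPowerSeries.constantCoeff FG = 0)
    -- `lam(FG(x,y)) = lam(x) + lam(y)`, coefficientwise
    (hlog : ∀ d : Fin 2 →₀ ℕ,
      (∑ n ∈ range (d 0 + d 1 + 1),
        PowerSeries.coeff n lam * MvPowerSeries.coeff d (FG ^ n)) =
      (if d 1 = 0 then PowerSeries.coeff (d 0) lam else 0) +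
      (if d 0 = 0 then PowerSeries.coeff (d 1) lam else 0))
    -- the invariant derivation and the polynomials `P_m`
    (D : PowerSeries K → PowerSeries K)
    (hD : ∀ f : PowerSeries K, D f = f.derivativeFun * (lam.derivativeFun)⁻¹)
    (P : ℕ → Polynomial K)
    (hP : ∀ m : ℕ, P m = ∑ k ∈ range (m + 1),
      Polynomial.C (PowerSeries.coeff m (lam ^ k) * ((k.factorial : K)⁻¹)) *
        Polynomial.X ^ k) :
    ∀ (f : PowerSeries K) (d : Fin 2 →₀ ℕ),
      (∑ n ∈ range (d 0 + d 1 + 1),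
        PowerSeries.coeff n f * MvPowerSeries.coeff d (FG ^ n)) =
      PowerSeries.coeff (d 0) ((P (d 1)).sum fun k c => c • D^[k] f) := by
  intro f d
  -- basic facts
  have hconst : PowerSeries.constantCoeff lam.derivativeFun = 1 := by
    rw [← PowerSeries.coeff_zero_eq_constantCoeff,
      show lam.derivativeFun = PowerSeries.derivative K lam from rfl, PowerSeries.coeff_derivative]
    simp [hlam1]
  have hinv : lam.derivativeFun * (lam.derivativeFun)⁻¹ = 1 :=
    PowerSeries.mul_inv_cancel _ (by rw [hconst]; exact one_ne_zero)
  have hlogS : Sub FG lam = emb0 lam + emb1 lam := by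
    apply MvPowerSeries.ext
    intro e
    rw [coeff_Sub, map_add, coeff_emb0, coeff_emb1]
    exact hlog e
  -- normalization of the right-hand side
  have hcoeffP : ∀ n, (P (d 1)).coeff n = if n < d 1 + 1 then
      PowerSeries.coeff (d 1) (lam ^ n) * ((n.factorial : K)⁻¹) else 0 := by
    intro n
    rw [hP, Polynomial.finset_sum_coeff]
    simp only [Polynomial.coeff_C_mul, Polynomial.coeff_X_pow, mul_ite, mul_one, mul_zero]
    rw [Finset.sum_ite_eq (range (d 1 + 1)) n]
    simp [Finset.mem_range]
  have hsupp : (P (d 1)).support ⊆ range (d 1 + 1) := by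
    intro n hn
    rw [Polynomial.mem_support_iff] at hn
    rw [Finset.mem_range]
    by_contra hc
    exact hn (by rw [hcoeffP n, if_neg hc])
  have hPsum : ∀ g : PowerSeries K,
      PowerSeries.coeff (d 0) ((P (d 1)).sum fun k c => c • D^[k] g) =
        ∑ k ∈ range (d 1 + 1),
          (PowerSeries.coeff (d 1) (lam ^ k) * ((k.factorial : K)⁻¹)) *
            PowerSeries.coeff (d 0) (D^[k] g) := by
    intro g
    rw [Polynomial.sum_def,
      Finset.sum_subset hsupp
        (by intro x _ hnx; rw [Polynomial.notMem_support_iff.1 hnx, zero_smul]),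
      map_sum]
    apply Finset.sum_congr rfl
    intro k hk
    rw [LinearMap.map_smul, smul_eq_mul, hcoeffP k, if_pos (mem_range.1 hk)]
  -- key computation for f = lam ^ j
  have key : ∀ j : ℕ,
      subCoeff FG (lam ^ j) d =
        ∑ k ∈ range (d 1 + 1),
          (PowerSeries.coeff (d 1) (lam ^ k) * ((k.factorial : K)⁻¹)) *
            PowerSeries.coeff (d 0) (D^[k] (lam ^ j)) := by
    intro j
    have hfac : ∀ k : ℕ, (j.descFactorial k : K) * ((k.factorial : K)⁻¹) = (j.choose k : K) := by
      intro k
      rw [Nat.descFactorial_eq_factorial_mul_choose, Nat.cast_mul, mul_comm ((k.factorial : K)),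
        mul_assoc, mul_inv_cancel₀ (Nat.cast_ne_zero.2 (Nat.factorial_ne_zero k)), mul_one]
    have hL : subCoeff FG (lam ^ j) d = ∑ m ∈ range (j + 1),
        (j.choose m : K) * (PowerSeries.coeff (d 1) (lam ^ m) *
          PowerSeries.coeff (d 0) (lam ^ (j - m))) := by
      rw [subCoeff_lam_pow hFG0 hlogS j d,
        ← Finset.sum_range_reflect (fun m => (j.choose m : K) *
          (PowerSeries.coeff (d 1) (lam ^ m) * PowerSeries.coeff (d 0) (lam ^ (j - m)))
          ) (j + 1)]
      apply Finset.sum_congr rfl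
      intro i hi
      simp only [mem_range] at hi
      have e1 : j + 1 - 1 - i = j - i := by omega
      have e2 : j - (j - i) = i := by omega
      rw [e1, e2, Nat.choose_symm (by omega : i ≤ j)]
      ring
    have hR : ∀ k, PowerSeries.coeff (d 0) (D^[k] (lam ^ j)) =
        (j.descFactorial k : K) * PowerSeries.coeff (d 0) (lam ^ (j - k)) := by
      intro k
      rw [Diter_lam_pow hD hinv k j, LinearMap.map_smul, smul_eq_mul]
    have hRsum : (∑ k ∈ range (d 1 + 1),
        (PowerSeries.coeff (d 1) (lam ^ k) * ((k.factorial : K)⁻¹)) *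
          PowerSeries.coeff (d 0) (D^[k] (lam ^ j))) =
        ∑ k ∈ range (d 1 + 1),
          (j.choose k : K) * (PowerSeries.coeff (d 1) (lam ^ k) *
            PowerSeries.coeff (d 0) (lam ^ (j - k))) := by
      apply Finset.sum_congr rfl
      intro k _
      rw [hR k, ← hfac k]
      ring
    rw [hL, hRsum]
    -- pad both sums to a common range
    set M := max j (d 1) + 1 with hM
    rw [Finset.sum_subset (Finset.range_subset_range.2 (by omega : j + 1 ≤ M))
        (by
          intro x hx hnx
          simp only [mem_range] at hx hnx
          rw [Nat.choose_eq_zero_of_lt (by omega), Nat.cast_zero, zero_mul]),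
      Finset.sum_subset (Finset.range_subset_range.2 (by omega : d 1 + 1 ≤ M))
        (by
          intro x hx hnx
          simp only [mem_range] at hx hnx
          rw [coeff_pow_lt hlam0 x (d 1) (by omega), zero_mul, mul_zero])]
  -- decomposition of f in terms of powers of lam
  set N := d 0 + d 1 with hN
  set c : ℕ → K := cseq lam f with hc
  set g : PowerSeries K := ∑ k ∈ range (N + 1), c k • lam ^ k with hgdef
  have hg : ∀ n, PowerSeries.coeff n g =
      ∑ k ∈ range (N + 1), c k * PowerSeries.coeff n (lam ^ k) := by
    intro n
    rw [hgdef, map_sum]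
    apply Finset.sum_congr rfl
    intro k _
    rw [LinearMap.map_smul, smul_eq_mul]
  have hag : ∀ n, n ≤ N → PowerSeries.coeff n f = PowerSeries.coeff n g := by
    intro n hn
    rw [hg, cseq_spec hlam0 hlam1 f n, ← hc]
    apply Finset.sum_subset (Finset.range_subset_range.2 (by omega))
    intro x hx hnx
    simp only [mem_range] at hx hnx
    rw [coeff_pow_lt hlam0 x n (by omega), mul_zero]
  -- LHS f = LHS g
  have hLfg : (∑ n ∈ range (d 0 + d 1 + 1),
      PowerSeries.coeff n f * MvPowerSeries.coeff d (FG ^ n)) = subCoeff FG g d := by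
    apply Finset.sum_congr rfl
    intro n hn
    simp only [mem_range] at hn
    rw [hag n (by omega)]
  -- swap sums on the left
  have swapL : subCoeff FG g d = ∑ k ∈ range (N + 1), c k * subCoeff FG (lam ^ k) d := by
    rw [subCoeff]
    simp_rw [hg, Finset.sum_mul]
    rw [Finset.sum_comm]
    apply Finset.sum_congr rfl
    intro k _
    rw [subCoeff, Finset.mul_sum]
    apply Finset.sum_congr rfl
    intro n _
    ring
  -- swap sums on the right
  have hDg : ∀ m, PowerSeries.coeff (d 0) (D^[m] g) =
      ∑ k ∈ range (N + 1), c k * PowerSeries.coeff (d 0) (D^[m] (lam ^ k)) := by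
    intro m
    rw [hgdef, Diter_sum hD, map_sum]
    apply Finset.sum_congr rfl
    intro k _
    rw [LinearMap.map_smul, smul_eq_mul]
  have swapR : (∑ m ∈ range (d 1 + 1),
      (PowerSeries.coeff (d 1) (lam ^ m) * ((m.factorial : K)⁻¹)) *
        PowerSeries.coeff (d 0) (D^[m] g)) =
      ∑ k ∈ range (N + 1), c k * ∑ m ∈ range (d 1 + 1),
        (PowerSeries.coeff (d 1) (lam ^ m) * ((m.factorial : K)⁻¹)) *
          PowerSeries.coeff (d 0) (D^[m] (lam ^ k)) := by
    simp_rw [hDg, Finset.mul_sum]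
    rw [Finset.sum_comm]
    apply Finset.sum_congr rfl
    intro k _
    apply Finset.sum_congr rfl
    intro m _
    ring
  -- truncation invariance of the right-hand side
  have Diter_sub : ∀ m (u v : PowerSeries K), D^[m] (u - v) = D^[m] u - D^[m] v := by
    intro m u v
    have h1 : u - v = u + (-1 : K) • v := by
      rw [neg_one_smul]; ring
    rw [h1, Diter_add hD, Diter_smul hD, neg_one_smul]
    ring
  have hRfg : ∀ m, m ≤ d 1 → PowerSeries.coeff (d 0) (D^[m] f) =
      PowerSeries.coeff (d 0) (D^[m] g) := by
    intro m hm
    have hz : ∀ n, n ≤ d 0 + m → PowerSeries.coeff n (f - g) = 0 := by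
      intro n hn
      rw [map_sub, hag n (by omega), sub_self]
    have h0 : PowerSeries.coeff (d 0) (D^[m] (f - g)) = 0 :=
      coeff_Diter_eq_zero hD m (f - g) (d 0) hz (d 0) le_rfl
    rw [Diter_sub, map_sub] at h0
    exact sub_eq_zero.mp h0
  -- assemble
  rw [hPsum f, hLfg, swapL]
  have : ∀ k ∈ range (N + 1), c k * subCoeff FG (lam ^ k) d =
      c k * ∑ m ∈ range (d 1 + 1),
        (PowerSeries.coeff (d 1) (lam ^ m) * ((m.factorial : K)⁻¹)) *
          PowerSeries.coeff (d 0) (D^[m] (lam ^ k)) := by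
    intro k _
    rw [key k]
  rw [Finset.sum_congr rfl this, ← swapR]
  apply Finset.sum_congr rfl
  intro m hm
  simp only [mem_range] at hm
  rw [hRfg m (by omega)]
end

section
/- Let P_m be the polynomials associated to a Lubin-Tate formal group G over o_L as above, with period Ω satisfying |Ω| = p^{-(1/(p-1) - 1/(e(q-1)))}. Fix n ≥ 1. If the power series exp(yΩ log_G(x)) = Σ_m P_m(yΩ) x^m is considered for |x| ≤ r^{1/q^n} and |y| ≤ p^{-n/e}, where r = p^{-q/(e(q-1))}, then for all m ≥ 1 and all such y, |P_m(yΩ)| · r^{m/q^n} < p^{-1/(p-1)}; equivalently sup_{|y| ≤ p^{-n/e}} |P_m(yΩ)| < p^{-1/(p-1)} · p^{m/(e q^{n-1}(q-1))}. -/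
open PowerSeries Polynomial Finset

lemma padicValNat_factorial_le_aux {p j : ℕ} (hp : p.Prime) (hj : 1 ≤ j) :
    (p - 1) * padicValNat p j.factorial ≤ j - 1 := by
  haveI : Fact p.Prime := ⟨hp⟩
  rw [sub_one_mul_padicValNat_factorial]
  have hd : 1 ≤ (p.digits j).sum := by
    rcases Nat.eq_zero_or_pos (p.digits j).sum with h | h
    · exfalso
      have hall := List.sum_eq_zero_iff.mp h
      have hne : p.digits j ≠ [] := Nat.digits_ne_nil_iff_ne_zero.mpr (by omega)
      have := Nat.getLast_digit_ne_zero p (show j ≠ 0 by omega)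
      exact this (hall _ (List.getLast_mem hne))
    · exact h
  omega

/-- Estimate for the Lubin-Tate polynomials `P_m`: with
`r = p^(-q/(e(q-1)))`, `‖Ω‖ = p^(-(1/(p-1) - 1/(e(q-1))))`, and the logarithm
`log_G = Σ a_k Z^k` satisfying the sup bound `‖a_k‖ · (r^{1/qⁿ})^k ≤ r·p^{n/e}` on the
disk `B(r^{1/qⁿ})`, one has, for all `m ≥ 1` and all `‖y‖ ≤ p^{-n/e}`,
`‖P_m(yΩ)‖ · r^{m/qⁿ} < p^{-1/(p-1)}`, where
`P_m(yΩ) = Σ_j ((yΩ)^j/j!)·[Z^m](log_G)^j` is the `Z^m`-coefficient of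
`exp(yΩ·log_G(Z))`. -/
theorem stmt_8 (p e q n : ℕ) (hp : p.Prime) (he : 1 ≤ e) (hq : 2 ≤ q) (hn : 1 ≤ n)
    (K : Type*) [NormedField K] [IsUltrametricDist K] [CharZero K]
    -- norms of natural numbers in `K` are `p`-adic
    (hKnat : ∀ k : ℕ, 0 < k → ‖(k : K)‖ = (p : ℝ) ^ (-(padicValNat p k : ℝ)))
    (a : ℕ → K) (ha0 : a 0 = 0) (ha1 : ‖a 1‖ = 1)
    (hlam : ∀ k : ℕ, ‖a k‖ *
      (((p : ℝ) ^ (-(q : ℝ) / (e * (q - 1)))) ^ ((1 : ℝ) / q ^ n)) ^ k ≤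
      ((p : ℝ) ^ (-(q : ℝ) / (e * (q - 1)))) * (p : ℝ) ^ ((n : ℝ) / e))
    (Ω : K)
    (hΩ : ‖Ω‖ = (p : ℝ) ^ (-((1 : ℝ) / (p - 1) - 1 / (e * (q - 1))))) :
    ∀ m : ℕ, 1 ≤ m → ∀ y : K, ‖y‖ ≤ (p : ℝ) ^ (-(n : ℝ) / e) →
      ‖∑ j ∈ range (m + 1), (y * Ω) ^ j * ((j.factorial : K)⁻¹) *
          PowerSeries.coeff m (PowerSeries.mk a ^ j)‖ *
        ((p : ℝ) ^ (-(q : ℝ) / (e * (q - 1)))) ^ ((m : ℝ) / q ^ n) <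
      (p : ℝ) ^ (-(1 : ℝ) / (p - 1)) := by
  intro m hm y hy
  have hp1 : (1 : ℝ) < (p : ℝ) := by exact_mod_cast hp.one_lt
  have hp0 : (0 : ℝ) < (p : ℝ) := lt_trans one_pos hp1
  have he0 : (0 : ℝ) < (e : ℝ) := by exact_mod_cast he
  have hq1 : (1 : ℝ) < (q : ℝ) := by exact_mod_cast hq
  set pr : ℝ := (p : ℝ) with hpr
  set r : ℝ := pr ^ (-(q : ℝ) / (e * (q - 1))) with hr
  set R : ℝ := r ^ ((1 : ℝ) / q ^ n) with hRdef
  have hr0 : 0 < r := Real.rpow_pos_of_pos hp0 _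
  have hR0 : 0 < R := Real.rpow_pos_of_pos hr0 _
  set M : ℝ := r * pr ^ ((n : ℝ) / e) with hM
  have hM0 : 0 < M := mul_pos hr0 (Real.rpow_pos_of_pos hp0 _)
  -- coefficient bound
  have key : ∀ j k : ℕ, ‖PowerSeries.coeff k (PowerSeries.mk a ^ j)‖ * R ^ k ≤ M ^ j := by
    intro j
    induction j with
    | zero =>
      intro k
      rcases eq_or_ne k 0 with rfl | hk
      · simp
      · simp [PowerSeries.coeff_one, hk]
    | succ j ih =>
      intro k
      rw [pow_succ, PowerSeries.coeff_mul]
      rw [← le_div_iff₀ (by positivity)]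
      apply IsUltrametricDist.norm_sum_le_of_forall_le_of_nonneg (by positivity)
      intro x hx
      rw [Finset.HasAntidiagonal.mem_antidiagonal] at hx
      rw [le_div_iff₀ (by positivity)]
      have hxk : R ^ k = R ^ x.1 * R ^ x.2 := by rw [← pow_add, hx]
      rw [norm_mul, hxk, pow_succ]
      calc ‖PowerSeries.coeff x.1 (PowerSeries.mk a ^ j)‖ *
            ‖PowerSeries.coeff x.2 (PowerSeries.mk a)‖ * (R ^ x.1 * R ^ x.2)
          = (‖PowerSeries.coeff x.1 (PowerSeries.mk a ^ j)‖ * R ^ x.1) *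
            (‖a x.2‖ * R ^ x.2) := by rw [PowerSeries.coeff_mk]; ring
        _ ≤ M ^ j * M := by
            apply mul_le_mul (ih x.1) _ (by positivity) (by positivity)
            exact hlam x.2
  -- rewrite the radius factor
  have hRm : r ^ ((m : ℝ) / q ^ n) = R ^ m := by
    rw [hRdef, ← Real.rpow_natCast (r ^ ((1 : ℝ) / q ^ n)) m, ← Real.rpow_mul hr0.le]
    congr 1
    ring
  rw [hRm]
  -- target intermediate bound
  set D : ℝ := pr ^ (-(1 : ℝ) / (pr - 1) - 1 / e) with hD
  have hD0 : 0 < D := Real.rpow_pos_of_pos hp0 _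
  have hDlt : D < pr ^ (-(1 : ℝ) / (pr - 1)) := by
    apply Real.rpow_lt_rpow_of_exponent_lt hp1
    have : 0 < 1 / (e : ℝ) := by positivity
    linarith
  refine lt_of_le_of_lt ?_ hDlt
  rw [← le_div_iff₀ (by positivity)]
  apply IsUltrametricDist.norm_sum_le_of_forall_le_of_nonneg (by positivity)
  intro j hj
  rw [le_div_iff₀ (by positivity)]
  rcases Nat.eq_zero_or_pos j with rfl | hj1
  · have : PowerSeries.coeff m ((PowerSeries.mk a : PowerSeries K) ^ 0) = 0 := by
      simp [PowerSeries.coeff_one, Nat.one_le_iff_ne_zero.mp hm]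
    rw [this]
    simp only [mul_zero, norm_zero, zero_mul]
    positivity
  -- j ≥ 1
  have hfac : ‖((j.factorial : K))⁻¹‖ = pr ^ ((padicValNat p j.factorial : ℝ)) := by
    rw [norm_inv, hKnat _ j.factorial_pos, ← Real.rpow_neg hp0.le, neg_neg]
  set v : ℝ := (padicValNat p j.factorial : ℝ) with hv
  have hv0 : 0 ≤ v := Nat.cast_nonneg _
  -- valuation bound
  have hvb : (pr - 1) * v ≤ (j : ℝ) - 1 := by
    have h1 := padicValNat_factorial_le_aux hp hj1
    have : ((p - 1) * padicValNat p j.factorial : ℕ) ≤ ((j - 1 : ℕ) : ℕ) := h1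
    have hcast : ((p - 1 : ℕ) : ℝ) = pr - 1 := by
      have : 1 ≤ p := hp.one_lt.le
      push_cast [this]
      ring
    calc (pr - 1) * v = (((p - 1) * padicValNat p j.factorial : ℕ) : ℝ) := by
          push_cast [hcast]; ring
      _ ≤ (((j - 1 : ℕ)) : ℝ) := by exact_mod_cast this
      _ ≤ (j : ℝ) - 1 := by
          have : 1 ≤ j := hj1
          push_cast [this]
          linarith
  -- bound the term
  have hΩ0 : 0 ≤ ‖Ω‖ := norm_nonneg _
  have step1 : ‖(y * Ω) ^ j * ((j.factorial : K))⁻¹ *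
      PowerSeries.coeff m (PowerSeries.mk a ^ j)‖ * R ^ m ≤
      (pr ^ (-(n : ℝ) / e)) ^ j * (pr ^ (-((1 : ℝ) / (pr - 1) - 1 / (e * ((q : ℝ) - 1))))) ^ j *
      pr ^ v * M ^ j := by
    rw [norm_mul, norm_mul, norm_pow, norm_mul, hfac]
    calc (‖y‖ * ‖Ω‖) ^ j * pr ^ v * ‖PowerSeries.coeff m (PowerSeries.mk a ^ j)‖ * R ^ m
        = (‖y‖ ^ j * ‖Ω‖ ^ j * pr ^ v) * (‖PowerSeries.coeff m (PowerSeries.mk a ^ j)‖ * R ^ m)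
          := by rw [mul_pow]; ring
      _ ≤ (‖y‖ ^ j * ‖Ω‖ ^ j * pr ^ v) * M ^ j := by
          apply mul_le_mul_of_nonneg_left (key j m) (by positivity)
      _ ≤ ((pr ^ (-(n : ℝ) / e)) ^ j * (pr ^ (-((1 : ℝ) / (pr - 1) - 1 / (e * ((q : ℝ) - 1))))) ^ j
          * pr ^ v) * M ^ j := by
          have h1 : ‖y‖ ^ j ≤ (pr ^ (-(n : ℝ) / e)) ^ j :=
            pow_le_pow_left₀ (norm_nonneg _) hy j
          have h2 : ‖Ω‖ ^ j = (pr ^ (-((1 : ℝ) / (pr - 1) - 1 / (e * ((q : ℝ) - 1))))) ^ j := by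
            rw [hΩ]
          rw [← h2]
          gcongr
      _ = (pr ^ (-(n : ℝ) / e)) ^ j * (pr ^ (-((1 : ℝ) / (pr - 1) - 1 / (e * ((q : ℝ) - 1))))) ^ j
          * pr ^ v * M ^ j := by ring
  refine step1.trans ?_
  -- collapse to a single rpow and compare exponents
  have collapse : (pr ^ (-(n : ℝ) / e)) ^ j *
      (pr ^ (-((1 : ℝ) / (pr - 1) - 1 / (e * ((q : ℝ) - 1))))) ^ j * pr ^ v * M ^ j =
      pr ^ ((j : ℝ) * (-(n : ℝ) / e) + (j : ℝ) * (-((1 : ℝ) / (pr - 1) - 1 / (e * ((q : ℝ) - 1))))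
        + v + (j : ℝ) * (-(q : ℝ) / (e * ((q : ℝ) - 1)) + (n : ℝ) / e)) := by
    rw [hM, hr, ← Real.rpow_add hp0,
      ← Real.rpow_natCast (pr ^ (-(n : ℝ) / e)) j, ← Real.rpow_mul hp0.le,
      ← Real.rpow_natCast (pr ^ (-((1 : ℝ) / (pr - 1) - 1 / (e * ((q : ℝ) - 1))))) j,
      ← Real.rpow_mul hp0.le,
      ← Real.rpow_natCast (pr ^ (-(q : ℝ) / (↑e * ((q : ℝ) - 1)) + (n : ℝ) / ↑e)) j,
      ← Real.rpow_mul hp0.le,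
      ← Real.rpow_add hp0, ← Real.rpow_add hp0, ← Real.rpow_add hp0]
    congr 1
    ring
  rw [collapse, hD]
  apply Real.rpow_le_rpow_left_iff hp1 |>.mpr
  -- exponent inequality
  have hj1' : (1 : ℝ) ≤ (j : ℝ) := by exact_mod_cast hj1
  have hpr1 : (0 : ℝ) < pr - 1 := by linarith
  have hq1' : (0 : ℝ) < (q : ℝ) - 1 := by linarith
  have hvb' : v ≤ ((j : ℝ) - 1) / (pr - 1) := by
    rw [le_div_iff₀ hpr1]
    linarith [hvb]
  have hz : ((q : ℝ) - 1) / (e * ((q : ℝ) - 1)) = 1 / e := by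
    rw [div_eq_div_iff (by positivity) (ne_of_gt he0)]
    ring
  have expand : (j : ℝ) * (-(n : ℝ) / e) +
      (j : ℝ) * (-((1 : ℝ) / (pr - 1) - 1 / (e * ((q : ℝ) - 1)))) + v +
      (j : ℝ) * (-(q : ℝ) / (e * ((q : ℝ) - 1)) + (n : ℝ) / e) =
      -(j : ℝ) / (pr - 1) + v - (j : ℝ) * (((q : ℝ) - 1) / (e * ((q : ℝ) - 1))) := by
    field_simp
    ring
  rw [expand, hz]
  have h1 : -(j : ℝ) / (pr - 1) + v ≤ -1 / (pr - 1) := by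
    have hdiv : -(j : ℝ) / (pr - 1) + ((j : ℝ) - 1) / (pr - 1) = -1 / (pr - 1) := by
      field_simp
      ring
    linarith [hvb']
  have h2 : (1 : ℝ) * (1 / e) ≤ (j : ℝ) * (1 / e) := by
    apply mul_le_mul_of_nonneg_right hj1' (by positivity)
  linarith
end

section
/- Let K be a complete discretely valued nonarchimedean field. A nonzero power series F(z) = Σ_{n≥0} a_n z^n with coefficients in K that is bounded on the open unit disk (equivalently, has bounded coefficients) has only finitely many zeroes z ∈ C_p with |z| < 1. -/
open Filter Finset

section Aux

variable {E : Type*} [NormedField E] [IsUltrametricDist E] [CompleteSpace E]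

private lemma stmt10_norm_add_eq {x y : E} (h : ‖y‖ < ‖x‖) : ‖x + y‖ = ‖x‖ := by
  rw [IsUltrametricDist.norm_add_eq_max_of_norm_ne_norm (by linarith : ‖x‖ ≠ ‖y‖),
    max_eq_left h.le]

private lemma stmt10_summable {c : ℕ → E} {S : ℝ} (hc : ∀ n, ‖c n‖ ≤ S) {z : E}
    (hz : ‖z‖ < 1) : Summable fun n => c n * z ^ n := by
  refine Summable.of_norm_bounded
    ((summable_geometric_of_lt_one (norm_nonneg z) hz).mul_left S) fun n => ?_
  rw [norm_mul, norm_pow]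
  exact mul_le_mul_of_nonneg_right (hc n) (by positivity)

private lemma stmt10_factor {S : ℝ} {c : ℕ → E} (hc : ∀ n, ‖c n‖ ≤ S) {z z₀ : E}
    (hz : ‖z‖ < 1) (hz₀ : ‖z₀‖ < 1) :
    (∑' n, c n * z ^ n) - (∑' n, c n * z₀ ^ n)
      = (z - z₀) * ∑' n, (∑' k, c (n + 1 + k) * z₀ ^ k) * z ^ n := by
  have hS : 0 ≤ S := le_trans (norm_nonneg _) (hc 0)
  set h : ℕ × ℕ → E := fun p => c (p.1 + 1 + p.2) * z ^ p.1 * z₀ ^ p.2 with hh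
  have hsum_h : Summable h := by
    refine Summable.of_norm_bounded
      (Summable.mul_of_nonneg ((summable_geometric_of_lt_one (norm_nonneg z) hz).mul_left S)
        (summable_geometric_of_lt_one (norm_nonneg z₀) hz₀)
        (fun i => by positivity) (fun k => by positivity)) fun p => ?_
    simp only [hh, norm_mul, norm_pow]
    exact mul_le_mul_of_nonneg_right
      (mul_le_mul_of_nonneg_right (hc _) (by positivity)) (by positivity)
  set H : ℕ × ℕ → E :=
    fun q => if q.2 < q.1 then c q.1 * z ^ q.2 * z₀ ^ (q.1 - 1 - q.2) else 0 with hH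
  set e : ℕ × ℕ → ℕ × ℕ := fun p => (p.1 + 1 + p.2, p.1) with he
  have he_inj : Function.Injective e := by
    rintro ⟨i, k⟩ ⟨i', k'⟩ hq
    simp only [he, Prod.mk.injEq] at hq
    obtain ⟨h1, h2⟩ := hq
    simp only [Prod.mk.injEq]
    omega
  have hHe : ∀ p, H (e p) = h p := by
    rintro ⟨i, k⟩
    simp only [hH, he, hh]
    rw [if_pos (by omega : i < i + 1 + k)]
    have : i + 1 + k - 1 - i = k := by omega
    rw [this]
  have hsupp' : ∀ q ∉ Set.range e, H q = 0 := by
    rintro ⟨n, i⟩ hq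
    by_cases hin : i < n
    · exact absurd ⟨(i, n - 1 - i), by
        simp only [he, Prod.mk.injEq]
        exact ⟨by omega, trivial⟩⟩ hq
    · exact if_neg hin
  have hsupp : Function.support H ⊆ Set.range e := by
    intro q hq
    by_contra hq'
    exact hq (hsupp' q hq')
  have hsum_H : Summable H := by
    refine (he_inj.summable_iff hsupp').mp ?_
    have : (H ∘ e) = h := funext hHe
    rw [this]; exact hsum_h
  have hEq1 : ∑' p, h p = ∑' q, H q := by
    rw [← he_inj.tsum_eq hsupp]
    exact tsum_congr fun p => (hHe p).symm
  have hrow : ∀ n, ∑' i, H (n, i) = ∑ i ∈ range n, c n * z ^ i * z₀ ^ (n - 1 - i) := by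
    intro n
    rw [tsum_eq_sum (s := range n) (fun i hi => if_neg (by simpa using hi))]
    exact Finset.sum_congr rfl fun i hi => if_pos (mem_range.mp hi)
  have hza : Summable fun n => c n * z ^ n := stmt10_summable hc hz
  have hzb : Summable fun n => c n * z₀ ^ n := stmt10_summable hc hz₀
  have hterm : ∀ n, c n * z ^ n - c n * z₀ ^ n
      = (z - z₀) * ∑ i ∈ range n, c n * z ^ i * z₀ ^ (n - 1 - i) := by
    intro n
    calc c n * z ^ n - c n * z₀ ^ n
        = c n * ((∑ i ∈ range n, z ^ i * z₀ ^ (n - 1 - i)) * (z - z₀)) := by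
          rw [geom_sum₂_mul, mul_sub]
      _ = (z - z₀) * (c n * ∑ i ∈ range n, z ^ i * z₀ ^ (n - 1 - i)) := by ring
      _ = (z - z₀) * ∑ i ∈ range n, c n * z ^ i * z₀ ^ (n - 1 - i) := by
          rw [Finset.mul_sum]
          exact congrArg _ (Finset.sum_congr rfl fun i _ => (mul_assoc _ _ _).symm)
  calc (∑' n, c n * z ^ n) - (∑' n, c n * z₀ ^ n)
      = ∑' n, (c n * z ^ n - c n * z₀ ^ n) := (hza.tsum_sub hzb).symm
    _ = ∑' n, (z - z₀) * ∑ i ∈ range n, c n * z ^ i * z₀ ^ (n - 1 - i) := tsum_congr hterm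
    _ = (z - z₀) * ∑' n, ∑ i ∈ range n, c n * z ^ i * z₀ ^ (n - 1 - i) := tsum_mul_left
    _ = (z - z₀) * ∑' n, ∑' i, H (n, i) := by
        rw [tsum_congr fun n => (hrow n).symm]
    _ = (z - z₀) * ∑' q, H q := by rw [← hsum_H.tsum_prod]
    _ = (z - z₀) * ∑' p, h p := by rw [← hEq1]
    _ = (z - z₀) * ∑' i, ∑' k, h (i, k) := by rw [hsum_h.tsum_prod]
    _ = (z - z₀) * ∑' n, (∑' k, c (n + 1 + k) * z₀ ^ k) * z ^ n := by
        congr 1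
        refine tsum_congr fun i => ?_
        rw [← tsum_mul_right]
        exact tsum_congr fun k => by simp only [hh]; ring

private lemma stmt10_nozero {S : ℝ} (hS : 0 < S) {c : ℕ → E} (hc : ∀ n, ‖c n‖ ≤ S)
    (hc0 : ‖c 0‖ = S) {z : E} (hz : ‖z‖ < 1)
    (hsum : HasSum (fun n => c n * z ^ n) 0) : False := by
  have hsummable : Summable fun n => c n * z ^ n := ⟨0, hsum⟩
  have h0 : (0 : E) = ∑' n, c n * z ^ n := hsum.tsum_eq.symm
  rw [hsummable.tsum_eq_zero_add] at h0
  have htail : ‖∑' n, c (n + 1) * z ^ (n + 1)‖ ≤ S * ‖z‖ := by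
    refine IsUltrametricDist.norm_tsum_le_of_forall_le_of_nonneg (by positivity) fun n => ?_
    rw [norm_mul, norm_pow]
    calc ‖c (n + 1)‖ * ‖z‖ ^ (n + 1)
        ≤ S * ‖z‖ ^ (n + 1) := mul_le_mul_of_nonneg_right (hc _) (by positivity)
      _ ≤ S * ‖z‖ :=
          mul_le_mul_of_nonneg_left (pow_le_of_le_one (norm_nonneg z) hz.le (by omega)) hS.le
  have hhead : ‖c 0 * z ^ 0‖ = S := by simpa using hc0
  have hlt : ‖∑' n, c (n + 1) * z ^ (n + 1)‖ < ‖c 0 * z ^ 0‖ := by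
    rw [hhead]
    calc ‖∑' n, c (n + 1) * z ^ (n + 1)‖ ≤ S * ‖z‖ := htail
      _ < S * 1 := mul_lt_mul_of_pos_left hz hS
      _ = S := mul_one S
  have hkey : ‖c 0 * z ^ 0 + ∑' n, c (n + 1) * z ^ (n + 1)‖ = S := by
    rw [stmt10_norm_add_eq hlt, hhead]
  rw [← h0, norm_zero] at hkey
  exact hS.ne' hkey.symm

private lemma stmt10_key {S : ℝ} (hS : 0 < S) :
    ∀ N : ℕ, ∀ c : ℕ → E, (∀ n, ‖c n‖ ≤ S) → ‖c N‖ = S →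
      {z : E | ‖z‖ < 1 ∧ HasSum (fun n => c n * z ^ n) 0}.Finite := by
  intro N
  induction N using Nat.strong_induction_on with
  | _ N ih =>
    intro c hc hcN
    rcases Set.eq_empty_or_nonempty {z : E | ‖z‖ < 1 ∧ HasSum (fun n => c n * z ^ n) 0} with
      hEmp | ⟨z₀, hz₀, hz₀sum⟩
    · rw [hEmp]; exact Set.finite_empty
    · obtain ⟨M, rfl⟩ : ∃ M, N = M + 1 := by
        rcases Nat.eq_zero_or_pos N with rfl | hpos
        · exact absurd hz₀sum (fun hh => stmt10_nozero hS hc hcN hz₀ hh)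
        · exact ⟨N - 1, by omega⟩
      set b : ℕ → E := fun n => ∑' k, c (n + 1 + k) * z₀ ^ k with hb
      have hb_le : ∀ n, ‖b n‖ ≤ S := by
        intro n
        refine IsUltrametricDist.norm_tsum_le_of_forall_le_of_nonneg hS.le fun k => ?_
        rw [norm_mul, norm_pow]
        calc ‖c (n + 1 + k)‖ * ‖z₀‖ ^ k
            ≤ S * ‖z₀‖ ^ k := mul_le_mul_of_nonneg_right (hc _) (by positivity)
          _ ≤ S * 1 :=
              mul_le_mul_of_nonneg_left (pow_le_one₀ (norm_nonneg z₀) hz₀.le) hS.le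
          _ = S := mul_one S
      have hbM : ‖b M‖ = S := by
        have hsummable : Summable fun k => c (M + 1 + k) * z₀ ^ k :=
          stmt10_summable (fun k => hc _) hz₀
        have hsplit : b M = c (M + 1) * z₀ ^ 0 + ∑' k, c (M + 1 + (k + 1)) * z₀ ^ (k + 1) := by
          simpa using hsummable.tsum_eq_zero_add
        have htail : ‖∑' k, c (M + 1 + (k + 1)) * z₀ ^ (k + 1)‖ ≤ S * ‖z₀‖ := by
          refine IsUltrametricDist.norm_tsum_le_of_forall_le_of_nonneg (by positivity) fun k => ?_
          rw [norm_mul, norm_pow]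
          calc ‖c (M + 1 + (k + 1))‖ * ‖z₀‖ ^ (k + 1)
              ≤ S * ‖z₀‖ ^ (k + 1) := mul_le_mul_of_nonneg_right (hc _) (by positivity)
            _ ≤ S * ‖z₀‖ :=
                mul_le_mul_of_nonneg_left
                  (pow_le_of_le_one (norm_nonneg z₀) hz₀.le (by omega)) hS.le
        have hhead : ‖c (M + 1) * z₀ ^ 0‖ = S := by simpa using hcN
        have hlt : ‖∑' k, c (M + 1 + (k + 1)) * z₀ ^ (k + 1)‖ < ‖c (M + 1) * z₀ ^ 0‖ := by
          rw [hhead]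
          calc ‖∑' k, c (M + 1 + (k + 1)) * z₀ ^ (k + 1)‖ ≤ S * ‖z₀‖ := htail
            _ < S * 1 := mul_lt_mul_of_pos_left hz₀ hS
            _ = S := mul_one S
        rw [hsplit, stmt10_norm_add_eq hlt, hhead]
      have hfin : {z : E | ‖z‖ < 1 ∧ HasSum (fun n => b n * z ^ n) 0}.Finite :=
        ih M (by omega) b hb_le hbM
      refine Set.Finite.subset (hfin.insert z₀) ?_
      rintro z ⟨hz, hzsum⟩
      rcases eq_or_ne z z₀ with rfl | hne
      · exact Set.mem_insert _ _
      · refine Set.mem_insert_of_mem _ ⟨hz, ?_⟩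
        have hsummb : Summable fun n => b n * z ^ n := stmt10_summable hb_le hz
        have hG : (z - z₀) * ∑' n, b n * z ^ n = 0 := by
          rw [hb, ← stmt10_factor hc hz hz₀, hzsum.tsum_eq, hz₀sum.tsum_eq, sub_zero]
        have hzero : ∑' n, b n * z ^ n = 0 := by
          rcases mul_eq_zero.mp hG with hcase | hcase
          · exact absurd (sub_eq_zero.mp hcase) hne
          · exact hcase
        exact hzero ▸ hsummb.hasSum

end Aux

/-- Let `K` be a complete discretely valued nonarchimedean field
(discreteness: every nonzero norm is an integer power of `‖π‖` for a fixed `π` with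
`0 < ‖π‖ < 1`).  A nonzero power series with coefficients in `K` that has bounded
coefficients (equivalently, is bounded on the open unit disk) has only finitely many
zeroes `z` with `‖z‖ < 1` in any complete extension `E` of `K`. -/
theorem stmt_10 (K : Type*) [NormedField K] [IsUltrametricDist K] [CompleteSpace K]
    (π : K) (hπ0 : 0 < ‖π‖) (hπ1 : ‖π‖ < 1)
    (hdisc : ∀ x : K, x ≠ 0 → ∃ n : ℤ, ‖x‖ = ‖π‖ ^ n)
    (E : Type*) [NormedField E] [IsUltrametricDist E] [CompleteSpace E]
    (f : K →+* E) (hf : ∀ x : K, ‖f x‖ = ‖x‖)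
    (a : ℕ → K) (hbdd : ∃ M : ℝ, ∀ n, ‖a n‖ ≤ M) (hne : ∃ n, a n ≠ 0) :
    {z : E | ‖z‖ < 1 ∧ HasSum (fun n => f (a n) * z ^ n) 0}.Finite := by
  obtain ⟨M, hM⟩ := hbdd
  obtain ⟨n₀, hn₀⟩ := hne
  have hMpos : 0 < M := lt_of_lt_of_le (norm_pos_iff.mpr hn₀) (hM n₀)
  set P : ℤ → Prop := fun m => ∃ n, a n ≠ 0 ∧ ‖a n‖ = ‖π‖ ^ m with hP
  have hinh : ∃ m, P m := by
    obtain ⟨m, hm⟩ := hdisc (a n₀) hn₀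
    exact ⟨m, n₀, hn₀, hm⟩
  obtain ⟨j, hj⟩ := exists_pow_lt_of_lt_one (inv_pos.mpr hMpos) hπ1
  have hbdd' : ∃ b : ℤ, ∀ m, P m → b ≤ m := by
    refine ⟨-(j : ℤ), fun m hm => ?_⟩
    by_contra hlt
    push_neg at hlt
    obtain ⟨n, hn, hnorm⟩ := hm
    have h1 : ‖π‖ ^ (-(j : ℤ)) < ‖π‖ ^ m := zpow_lt_zpow_right_of_lt_one₀ hπ0 hπ1 hlt
    have h2 : ‖π‖ ^ m ≤ M := hnorm ▸ hM n
    have h3 : M < ‖π‖ ^ (-(j : ℤ)) := by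
      rw [zpow_neg, zpow_natCast, lt_inv_comm₀ hMpos (by positivity)]
      exact hj
    linarith
  obtain ⟨m₀, ⟨N, hN0, hNnorm⟩, hmin⟩ := Int.exists_least_of_bdd hbdd' hinh
  set S := ‖π‖ ^ m₀ with hSdef
  have hS : 0 < S := zpow_pos hπ0 m₀
  have hle : ∀ n, ‖f (a n)‖ ≤ S := by
    intro n
    rw [hf]
    by_cases h : a n = 0
    · simp only [h, norm_zero]; exact hS.le
    · obtain ⟨m, hm⟩ := hdisc _ h
      rw [hm]
      exact zpow_le_zpow_right_of_le_one₀ hπ0 hπ1.le (hmin m ⟨n, h, hm⟩)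
  have hNe : ‖f (a N)‖ = S := by rw [hf, hNnorm]
  exact stmt10_key hS N (fun n => f (a n)) hle hNe
end

section
/- For r ∈ p^Q with p^{-p/(p-1)} ≤ r < 1 and z ∈ C_p with |z - 1| < 1: |z^p - 1| ≤ r if and only if |z - 1| ≤ r^{1/p}. -/
/-- In `ℂ_p` (modelled by an ultrametric field `K` of characteristic
zero with `‖p‖ = p⁻¹`), for `r ∈ p^ℚ` with `p^(-p/(p-1)) ≤ r < 1` and `z` with
`‖z - 1‖ < 1`:  `‖z^p - 1‖ ≤ r` if and only if `‖z - 1‖ ≤ r^(1/p)`. -/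
theorem stmt_14 (p : ℕ) (hp : p.Prime)
    (K : Type*) [NormedField K] [IsUltrametricDist K] [CharZero K]
    (hpK : ‖(p : K)‖ = (p : ℝ)⁻¹)
    (r : ℝ) (hrQ : ∃ t : ℚ, r = (p : ℝ) ^ (t : ℝ))
    (hr₁ : (p : ℝ) ^ (-(p : ℝ) / ((p : ℝ) - 1)) ≤ r) (hr₂ : r < 1)
    (z : K) (hz : ‖z - 1‖ < 1) :
    ‖z ^ p - 1‖ ≤ r ↔ ‖z - 1‖ ≤ r ^ ((1 : ℝ) / p) := by
  have hp1 : 1 < p := hp.one_lt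
  have hpR : (1 : ℝ) < p := by exact_mod_cast hp1
  have hpR0 : (0 : ℝ) < p := by linarith
  have hr0 : 0 < r := by
    obtain ⟨t, ht⟩ := hrQ
    rw [ht]; exact Real.rpow_pos_of_pos hpR0 _
  set s : ℝ := r ^ ((1 : ℝ) / p) with hs_def
  have hs0 : 0 < s := Real.rpow_pos_of_pos hr0 _
  have hs1 : s < 1 := Real.rpow_lt_one hr0.le hr₂ (by positivity)
  have hsp : s ^ p = r := by
    rw [hs_def, ← Real.rpow_natCast (r ^ ((1:ℝ)/p)) p, ← Real.rpow_mul hr0.le]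
    rw [one_div, inv_mul_cancel₀ (by positivity), Real.rpow_one]
  -- p⁻¹ ≤ s ^ (p - 1)
  have hkey : (p : ℝ)⁻¹ ≤ s ^ (p - 1) := by
    have hb : (p : ℝ) ^ (-(1 : ℝ) / ((p : ℝ) - 1)) ≤ s := by
      have := Real.rpow_le_rpow (Real.rpow_nonneg hpR0.le _) hr₁ (le_of_lt (by positivity : (0:ℝ) < 1 / p))
      have hne1 : (p : ℝ) - 1 ≠ 0 := by linarith
      have hne2 : (p : ℝ) ≠ 0 := by positivity
      rwa [← Real.rpow_mul hpR0.le, show (-(p : ℝ) / ((p : ℝ) - 1)) * (1 / p) = -1 / ((p:ℝ) - 1) by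
        field_simp] at this
    calc (p : ℝ)⁻¹ = ((p : ℝ) ^ (-(1 : ℝ) / ((p : ℝ) - 1))) ^ (p - 1) := by
          rw [← Real.rpow_natCast ((p : ℝ) ^ (-(1 : ℝ) / ((p : ℝ) - 1))) (p-1),
            ← Real.rpow_mul hpR0.le]
          have hcast : ((p - 1 : ℕ) : ℝ) = (p : ℝ) - 1 := by
            rw [Nat.cast_sub hp1.le]; norm_num
          rw [hcast, div_mul_cancel₀ _ (by linarith : (p : ℝ) - 1 ≠ 0)]
          rw [Real.rpow_neg_one]
      _ ≤ s ^ (p - 1) := pow_le_pow_left₀ (Real.rpow_nonneg hpR0.le _) hb _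
  set w : K := z - 1 with hw_def
  have hzw : z = w + 1 := by rw [hw_def]; ring
  -- binomial expansion
  set S : K := ∑ k ∈ Finset.Ico 1 p, (p.choose k : K) * w ^ k with hS_def
  have hexp : z ^ p - 1 = w ^ p + S := by
    have hz2 : z ^ p = ∑ k ∈ Finset.range (p+1), w ^ k * (p.choose k : K) := by
      rw [hzw, add_pow]; simp
    rw [hz2, Finset.sum_range_succ, Finset.range_eq_Ico,
      Finset.sum_eq_sum_Ico_succ_bot (by omega : 0 < p)]
    simp only [pow_zero, Nat.choose_zero_right, Nat.cast_one, one_mul, mul_one,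
      Nat.choose_self]
    rw [hS_def, show (1:K) + (∑ k ∈ Finset.Ico 1 p, w ^ k * (p.choose k : K)) + w ^ p - 1
        = w ^ p + ∑ k ∈ Finset.Ico 1 p, w ^ k * (p.choose k : K) by ring]
    congr 1
    exact Finset.sum_congr rfl fun k _ => by ring
  -- bound for middle coefficients
  have hcoeff : ∀ k, k ∈ Finset.Ico 1 p → ‖((p.choose k : ℕ) : K)‖ ≤ (p : ℝ)⁻¹ := by
    intro k hk
    simp only [Finset.mem_Ico] at hk
    obtain ⟨m, hm⟩ := Nat.Prime.dvd_choose_self hp (by omega) hk.2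
    rw [hm]
    push_cast
    rw [norm_mul, hpK]
    calc (p : ℝ)⁻¹ * ‖(m : K)‖ ≤ (p : ℝ)⁻¹ * 1 := by
          exact mul_le_mul_of_nonneg_left (IsUltrametricDist.norm_natCast_le_one K m) (by positivity)
      _ = (p : ℝ)⁻¹ := mul_one _
  constructor
  · -- forward: contrapositive
    intro h
    by_contra hcon
    push_neg at hcon
    have hw1 : ‖w‖ < 1 := hz
    have hwpos : 0 < ‖w‖ := lt_trans hs0 hcon
    -- p⁻¹ < ‖w‖ ^ (p-1)
    have h1 : (p : ℝ)⁻¹ < ‖w‖ ^ (p - 1) :=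
      lt_of_le_of_lt hkey (pow_lt_pow_left₀ hcon hs0.le (by omega))
    -- ‖S‖ ≤ p⁻¹ * ‖w‖
    have hSle : ‖S‖ ≤ (p : ℝ)⁻¹ * ‖w‖ := by
      apply IsUltrametricDist.norm_sum_le_of_forall_le_of_nonneg (by positivity)
      intro k hk
      simp only [Finset.mem_Ico] at hk
      rw [norm_mul, norm_pow]
      calc ‖((p.choose k : ℕ) : K)‖ * ‖w‖ ^ k ≤ (p : ℝ)⁻¹ * ‖w‖ ^ k := by
            exact mul_le_mul_of_nonneg_right (hcoeff k (by simp [Finset.mem_Ico]; omega)) (by positivity)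
        _ ≤ (p : ℝ)⁻¹ * ‖w‖ := by
            apply mul_le_mul_of_nonneg_left _ (by positivity)
            calc ‖w‖ ^ k ≤ ‖w‖ ^ 1 := pow_le_pow_of_le_one (norm_nonneg _) hw1.le hk.1
              _ = ‖w‖ := pow_one _
    have hSlt : ‖S‖ < ‖w ^ p‖ := by
      rw [norm_pow]
      calc ‖S‖ ≤ (p : ℝ)⁻¹ * ‖w‖ := hSle
        _ < ‖w‖ ^ (p - 1) * ‖w‖ := mul_lt_mul_of_pos_right h1 hwpos
        _ = ‖w‖ ^ p := by rw [← pow_succ]; congr 1; omega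
    have heq : ‖z ^ p - 1‖ = ‖w‖ ^ p := by
      rw [hexp, IsUltrametricDist.norm_add_eq_max_of_norm_ne_norm hSlt.ne',
        max_eq_left hSlt.le, norm_pow]
    have : r < ‖z ^ p - 1‖ := by
      rw [heq, ← hsp]
      exact pow_lt_pow_left₀ hcon hs0.le (by omega)
    linarith
  · -- backward
    intro h
    rw [hexp]
    have hterm : ∀ k, k ∈ Finset.Ico 1 p → ‖(p.choose k : K) * w ^ k‖ ≤ r := by
      intro k hk
      simp only [Finset.mem_Ico] at hk
      rw [norm_mul, norm_pow]
      calc ‖((p.choose k : ℕ) : K)‖ * ‖w‖ ^ k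
          ≤ (p : ℝ)⁻¹ * s ^ k := by
            apply mul_le_mul (hcoeff k (by simp [Finset.mem_Ico]; omega))
              (pow_le_pow_left₀ (norm_nonneg _) h k) (by positivity) (by positivity)
        _ ≤ s ^ (p - k) * s ^ k := by
            apply mul_le_mul_of_nonneg_right _ (by positivity)
            calc (p : ℝ)⁻¹ ≤ s ^ (p - 1) := hkey
              _ ≤ s ^ (p - k) := pow_le_pow_of_le_one hs0.le hs1.le (by omega)
        _ = s ^ p := by rw [← pow_add]; congr 1; omega
        _ = r := hsp
    have hSr : ‖S‖ ≤ r := IsUltrametricDist.norm_sum_le_of_forall_le_of_nonneg hr0.le hterm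
    have hwp : ‖w ^ p‖ ≤ r := by
      rw [norm_pow, ← hsp]; exact pow_le_pow_left₀ (norm_nonneg _) h p
    calc ‖w ^ p + S‖ ≤ max ‖w ^ p‖ ‖S‖ := IsUltrametricDist.norm_add_le_max _ _
      _ ≤ r := max_le hwp hSr
end

section
/- Let f: o_L → K be a locally Q_p-analytic function on the ring of integers o of a finite extension L of Q_p, with values in a complete extension K of L. Suppose that for the Q_p-linear derivation action of the Lie algebra g = L on f one has (t·x)f = t·(x f) for all t ∈ L and x ∈ g. Then f is locally L-analytic, i.e. locally given by convergent power series in the single variable of o_L. -/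
open scoped Topology

section symm

variable {𝕜 : Type*} [NontriviallyNormedField 𝕜] {E F : Type*} [NormedAddCommGroup E]
  [NormedSpace 𝕜 E] [NormedAddCommGroup F] [NormedSpace 𝕜 F]

theorem myDerivSeries_one_apply (p : FormalMultilinearSeries 𝕜 E F) (v w : E) :
    p.derivSeries 1 (fun _ ↦ v) w =
      ∑ s : {s : Finset (Fin 2) // s.card = 1},
        p 2 ((s : Finset (Fin 2)).piecewise (fun _ ↦ v) (fun _ ↦ w)) := by
  simp only [FormalMultilinearSeries.derivSeries,
    ContinuousLinearMap.compFormalMultilinearSeries_apply,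
    FormalMultilinearSeries.changeOriginSeries,
    ContinuousLinearMap.compContinuousMultilinearMap_coe, ContinuousLinearEquiv.coe_coe,
    LinearIsometryEquiv.coe_coe, Function.comp_apply, ContinuousMultilinearMap.sum_apply,
    map_sum, ContinuousLinearMap.coe_sum', Finset.sum_apply,
    continuousMultilinearCurryFin1_apply, Matrix.zero_empty]
  congr 1 with s
  rw [Fin.snoc_zero, FormalMultilinearSeries.changeOriginSeriesTerm_apply]

theorem myDerivSeries_one_symm (p : FormalMultilinearSeries 𝕜 E F) (v w : E) :
    p.derivSeries 1 (fun _ ↦ v) w = p.derivSeries 1 (fun _ ↦ w) v := by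
  classical
  rw [myDerivSeries_one_apply, myDerivSeries_one_apply]
  refine Fintype.sum_equiv
    ⟨fun s => ⟨(s : Finset (Fin 2))ᶜ, by simp [Finset.card_compl, s.2]⟩,
     fun s => ⟨(s : Finset (Fin 2))ᶜ, by simp [Finset.card_compl, s.2]⟩,
     fun s => Subtype.ext (compl_compl _), fun s => Subtype.ext (compl_compl _)⟩ _ _ ?_
  intro s
  simp only [Equiv.coe_fn_mk]
  rw [Finset.piecewise_compl]

/-- Symmetry of the second derivative of an analytic function, over any field. -/
theorem mySecond_symm [CompleteSpace F] {f : E → F} {p : FormalMultilinearSeries 𝕜 E F}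
    {x : E} {r : ENNReal} (h : HasFPowerSeriesOnBall f p x r) (v w : E) :
    fderiv 𝕜 (fun z => fderiv 𝕜 f z w) x v = fderiv 𝕜 (fun z => fderiv 𝕜 f z v) x w := by
  have hd := h.fderiv
  have hA : HasFDerivAt (fderiv 𝕜 f)
      ((continuousMultilinearCurryFin1 𝕜 E (E →L[𝕜] F)) (p.derivSeries 1)) x :=
    hd.hasFPowerSeriesAt.hasFDerivAt
  have hDf : DifferentiableAt 𝕜 (fderiv 𝕜 f) x := hA.differentiableAt
  have key : ∀ u : E, fderiv 𝕜 (fun z => fderiv 𝕜 f z u) x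
      = (fderiv 𝕜 (fderiv 𝕜 f) x).flip u := by
    intro u
    have h0 := fderiv_clm_apply (c := fderiv 𝕜 f) (u := fun _ => u) hDf (differentiableAt_const u)
    simpa using h0
  rw [key w, key v]
  simp only [ContinuousLinearMap.flip_apply]
  rw [hA.fderiv]
  simp only [continuousMultilinearCurryFin1_apply, Matrix.zero_empty, Fin.snoc_zero]
  exact myDerivSeries_one_symm p v w

/-- The tower of iterated directional derivatives in the direction `v`. -/
noncomputable def dTower (f : E → F) (v : E) : ℕ → E → F :=
  fun n => (fun (u : E → F) (y : E) => fderiv 𝕜 u y v)^[n] f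

@[simp] theorem dTower_zero (f : E → F) (v : E) : dTower (𝕜 := 𝕜) f v 0 = f := rfl

theorem dTower_succ (f : E → F) (v : E) (n : ℕ) (y : E) :
    dTower (𝕜 := 𝕜) f v (n + 1) y = fderiv 𝕜 (dTower (𝕜 := 𝕜) f v n) y v := by
  unfold dTower
  rw [Function.iterate_succ_apply']

end symm

/-- (Lemma 1.1 of Schneider–Teitelbaum.)  Let `f : o_L → K` be a
locally `ℚ_p`-analytic function on the ring of integers `o = {x : L | ‖x‖ ≤ 1}` of a
finite extension `L/ℚ_p`, with values in a complete extension `K` of `L`.  If the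
directional (line) derivatives of `f` satisfy the Cauchy–Riemann condition
`(t·x)f = t·(xf)` for all `t ∈ L`, `x ∈ Lie algebra = L`, then `f` is locally
`L`-analytic on `o`. -/
theorem stmt_19 (p : ℕ) [Fact p.Prime]
    (L : Type*) [NontriviallyNormedField L] [NormedAlgebra ℚ_[p] L]
    [FiniteDimensional ℚ_[p] L]
    (K : Type*) [NontriviallyNormedField K] [NormedAlgebra ℚ_[p] K] [NormedAlgebra L K]
    [IsScalarTower ℚ_[p] L K] [CompleteSpace K]
    (f : L → K)
    (hf : AnalyticOnNhd ℚ_[p] f {x : L | ‖x‖ ≤ 1})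
    (hCR : ∀ g ∈ {x : L | ‖x‖ ≤ 1}, ∀ x t : L,
      lineDeriv ℚ_[p] f g (t * x) = t • lineDeriv ℚ_[p] f g x) :
    AnalyticOnNhd L f {x : L | ‖x‖ ≤ 1} := by
  classical
  haveI : IsUltrametricDist L := IsUltrametricDist.of_normedAlgebra ℚ_[p]
  haveI : SMulCommClass ℚ_[p] L K := by
    refine ⟨fun c t x => ?_⟩
    rw [← algebraMap_smul L c x, ← algebraMap_smul L c (t • x), smul_smul, smul_smul, mul_comm]
  have hUopen : IsOpen {x : L | ‖x‖ ≤ 1} := by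
    have : {x : L | ‖x‖ ≤ 1} = Metric.closedBall (0 : L) 1 := by
      ext x
      simp [Metric.mem_closedBall, dist_zero_right]
    rw [this]
    exact IsUltrametricDist.isOpen_closedBall _ one_ne_zero
  set U : Set L := {x : L | ‖x‖ ≤ 1} with hUdef
  set F : ℕ → L → K := dTower (𝕜 := ℚ_[p]) f (1 : L) with hFdef
  -- CR condition in fderiv form for f
  have hCR' : ∀ y ∈ U, ∀ t : L, fderiv ℚ_[p] f y t = t • fderiv ℚ_[p] f y (1 : L) := by
    intro y hy t
    have hd : DifferentiableAt ℚ_[p] f y := (hf y hy).differentiableAt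
    have h1 := hCR y hy 1 t
    rw [mul_one, hd.lineDeriv_eq_fderiv, hd.lineDeriv_eq_fderiv] at h1
    exact h1
  -- the key induction: every F n is analytic on U and satisfies CR
  have key : ∀ n : ℕ, AnalyticOnNhd ℚ_[p] (F n) U ∧
      ∀ y ∈ U, ∀ t : L, fderiv ℚ_[p] (F n) y t = t • F (n + 1) y := by
    intro n
    induction n with
    | zero =>
      refine ⟨hf, fun y hy t => ?_⟩
      rw [hFdef, dTower_succ]
      exact hCR' y hy t
    | succ n ih =>
      have hFn1 : F (n + 1) = fun y => fderiv ℚ_[p] (F n) y (1 : L) :=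
        funext fun y => by rw [hFdef]; exact dTower_succ f 1 n y
      have hAn : AnalyticOnNhd ℚ_[p] (fderiv ℚ_[p] (F n)) U := ih.1.fderiv
      have hA1 : AnalyticOnNhd ℚ_[p] (F (n + 1)) U := by
        rw [hFn1]
        have := (ContinuousLinearMap.apply ℚ_[p] K (1 : L)).comp_analyticOnNhd hAn
        exact this
      refine ⟨hA1, fun y hy t => ?_⟩
      obtain ⟨q, hq⟩ := ih.1 y hy
      obtain ⟨r, hr⟩ := hq
      have hev : (fun z => fderiv ℚ_[p] (F n) z t) =ᶠ[𝓝 y] fun z => t • F (n + 1) z :=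
        Filter.eventuallyEq_of_mem (hUopen.mem_nhds hy) (fun z hz => ih.2 z hz t)
      have hFn2 : F (n + 1 + 1) y = fderiv ℚ_[p] (F (n+1)) y (1 : L) := by
        rw [hFdef]; exact dTower_succ f 1 (n+1) y
      calc fderiv ℚ_[p] (F (n + 1)) y t
          = fderiv ℚ_[p] (fun z => fderiv ℚ_[p] (F n) z (1 : L)) y t := by rw [← hFn1]
        _ = fderiv ℚ_[p] (fun z => fderiv ℚ_[p] (F n) z t) y (1 : L) := mySecond_symm hr t 1
        _ = fderiv ℚ_[p] (fun z => t • F (n + 1) z) y (1 : L) := by rw [hev.fderiv_eq]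
        _ = (t • fderiv ℚ_[p] (F (n + 1)) y) (1 : L) := by
            rw [fderiv_fun_const_smul ((hA1 y hy).differentiableAt) t]
        _ = t • F (n + 1 + 1) y := by rw [hFn2]; rfl
  -- the continuous linear map `c ↦ ((m) ↦ (∏ i, m i) • c)`
  let Φ : ∀ n : ℕ, K →L[ℚ_[p]] ContinuousMultilinearMap ℚ_[p] (fun _ : Fin n => L) K := fun n =>
    LinearMap.mkContinuous
      { toFun := fun c => ((ContinuousLinearMap.id ℚ_[p] L).smulRight c).compContinuousMultilinearMap
          (ContinuousMultilinearMap.mkPiAlgebraFin ℚ_[p] n L)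
        map_add' := fun c c' => by
          ext m
          simp only [ContinuousLinearMap.compContinuousMultilinearMap_coe, Function.comp_apply,
            ContinuousLinearMap.smulRight_apply, ContinuousLinearMap.id_apply,
            ContinuousMultilinearMap.add_apply]
          rw [smul_add]
        map_smul' := fun a c => by
          ext m
          simp only [ContinuousLinearMap.compContinuousMultilinearMap_coe, Function.comp_apply,
            ContinuousLinearMap.smulRight_apply, ContinuousLinearMap.id_apply,
            ContinuousMultilinearMap.smul_apply, RingHom.id_apply]
          rw [smul_comm] }
      1
      (fun c => by
        rw [one_mul]
        refine ContinuousMultilinearMap.opNorm_le_bound (norm_nonneg c) (fun m => ?_)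
        simp only [LinearMap.coe_mk, AddHom.coe_mk,
          ContinuousLinearMap.compContinuousMultilinearMap_coe, Function.comp_apply,
          ContinuousMultilinearMap.mkPiAlgebraFin_apply, ContinuousLinearMap.smulRight_apply,
          ContinuousLinearMap.id_apply]
        rw [norm_smul, List.prod_ofFn, norm_prod, mul_comm])
  have Φ_apply : ∀ (n : ℕ) (c : K) (m : Fin n → L), Φ n c m = (∏ i, m i) • c := by
    intro n c m
    simp only [Φ, LinearMap.mkContinuous_apply, LinearMap.coe_mk, AddHom.coe_mk,
      ContinuousLinearMap.compContinuousMultilinearMap_coe, Function.comp_apply,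
      ContinuousMultilinearMap.mkPiAlgebraFin_apply, ContinuousLinearMap.smulRight_apply,
      ContinuousLinearMap.id_apply, List.prod_ofFn]
  -- iterated derivatives of f on U are given by the tower
  have iter : ∀ n : ℕ, ∀ y ∈ U, iteratedFDeriv ℚ_[p] n f y = Φ n (F n y) := by
    intro n
    induction n with
    | zero =>
      intro y hy
      ext m
      rw [Φ_apply]
      simp [iteratedFDeriv_zero_apply, hFdef]
    | succ n ih =>
      intro y hy
      ext m
      rw [iteratedFDeriv_succ_apply_left]
      have hev : iteratedFDeriv ℚ_[p] n f =ᶠ[𝓝 y] fun z => Φ n (F n z) :=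
        Filter.eventuallyEq_of_mem (hUopen.mem_nhds hy) (fun z hz => ih z hz)
      rw [hev.fderiv_eq]
      have hdF : HasFDerivAt (F n) (fderiv ℚ_[p] (F n) y) y :=
        ((key n).1 y hy).differentiableAt.hasFDerivAt
      have hcomp : HasFDerivAt (fun z => (Φ n) (F n z))
          ((Φ n).comp (fderiv ℚ_[p] (F n) y)) y := (Φ n).hasFDerivAt.comp y hdF
      rw [hcomp.fderiv]
      simp only [ContinuousLinearMap.coe_comp', Function.comp_apply]
      rw [(key n).2 y hy (m 0), Φ_apply, Φ_apply, smul_smul, Fin.prod_univ_succ, mul_comm]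
      rfl
  -- conclusion: build the L-power series at each point of U
  intro g hg
  obtain ⟨p', hp'⟩ := hf g hg
  obtain ⟨r, hr⟩ := hp'
  have coeff : ∀ (n : ℕ) (h : L), p' n (fun _ => h) = h ^ n • ((n.factorial : ℚ_[p])⁻¹ • F n g) := by
    intro n h
    have h1 := hr.factorial_smul h n
    rw [iter n g hg, Φ_apply, Finset.prod_const, Finset.card_univ, Fintype.card_fin] at h1
    have h2 : (n.factorial : ℚ_[p]) • p' n (fun _ => h) = h ^ n • F n g := by
      rw [Nat.cast_smul_eq_nsmul]; exact h1
    have hne : (n.factorial : ℚ_[p]) ≠ 0 := Nat.cast_ne_zero.2 (Nat.factorial_ne_zero n)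
    calc p' n (fun _ => h)
        = (n.factorial : ℚ_[p])⁻¹ • ((n.factorial : ℚ_[p]) • p' n (fun _ => h)) := (inv_smul_smul₀ hne _).symm
      _ = (n.factorial : ℚ_[p])⁻¹ • (h ^ n • F n g) := by rw [h2]
      _ = h ^ n • ((n.factorial : ℚ_[p])⁻¹ • F n g) := smul_comm _ _ _
  refine ⟨fun n => ContinuousMultilinearMap.mkPiRing L (Fin n) ((n.factorial : ℚ_[p])⁻¹ • F n g),
    r, ?_, hr.r_pos, ?_⟩
  · refine ENNReal.le_of_forall_nnreal_lt (fun s hs => ?_)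
    obtain ⟨C, hC, hbound⟩ := p'.norm_mul_pow_le_of_lt_radius (lt_of_lt_of_le hs hr.r_le)
    refine FormalMultilinearSeries.le_radius_of_bound _ C (fun n => ?_)
    refine le_trans (mul_le_mul_of_nonneg_right ?_ (by positivity)) (hbound n)
    rw [ContinuousMultilinearMap.norm_mkPiRing]
    have h1 : (n.factorial : ℚ_[p])⁻¹ • F n g = p' n (fun _ => (1 : L)) := by
      rw [coeff n 1]; simp
    rw [h1]
    refine le_trans ((p' n).le_opNorm _) ?_
    simp
  · intro h hy
    have hfun : (fun n => ContinuousMultilinearMap.mkPiRing L (Fin n)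
        ((n.factorial : ℚ_[p])⁻¹ • F n g) (fun _ => h)) = fun n => p' n (fun _ => h) := by
      funext n
      rw [ContinuousMultilinearMap.mkPiRing_apply, Finset.prod_const, Finset.card_univ,
        Fintype.card_fin, coeff]
    rw [hfun]
    exact hr.hasSum hy
end
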